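/- arXiv:2605.20419 — 7 statements merged into one kernel-verified Lean document; each statement's English description precedes it below -/
import Mathlib

section
/- In the rooted binary tree T (vertices = finite binary strings, root o = empty string), if d(φ(o),φ(x)) < σ(n) for EVERY vertex x at distance n from o, where φ : T → Z satisfies the gentleness bound |B(o,n) ∩ φ⁻¹(B(φ(o),r))| ≤ C(Cn)^{(Cr)^s} with C > 1, then σ(n) ≥ (1/C)·((n·log 2 − log C)/log(Cn))^{1/s}. -/
open SimpleGraph Metric

/-- The rooted binary tree: vertices are finite binary strings, two strings are
adjacent when one is obtained from the other by appending a digit on the right. -/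
def binaryTree : SimpleGraph (List Bool) :=
  SimpleGraph.fromRel (fun u v => ∃ b : Bool, v = u ++ [b])

lemma bt_adj_length {u v : List Bool} (h : binaryTree.Adj u v) :
    v.length = u.length + 1 ∨ u.length = v.length + 1 := by
  rcases h with ⟨-, ⟨b, rfl⟩ | ⟨b, rfl⟩⟩ <;> simp

lemma bt_walk_length {u v : List Bool} (w : binaryTree.Walk u v) :
    v.length ≤ u.length + w.length := by
  induction w with
  | nil => simp
  | cons h p ih =>
    rcases bt_adj_length h with h' | h' <;> simp [Walk.length_cons] <;> omega

lemma bt_walk_exists (x : List Bool) :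
    ∃ w : binaryTree.Walk [] x, w.length = x.length := by
  induction x using List.reverseRecOn with
  | nil => exact ⟨Walk.nil, rfl⟩
  | append_singleton l b ih =>
    obtain ⟨w, hw⟩ := ih
    have hadj : binaryTree.Adj l (l ++ [b]) := by
      refine ⟨?_, Or.inl ⟨b, rfl⟩⟩
      intro h; apply_fun List.length at h; simp at h
    exact ⟨w.concat hadj, by simp [Walk.length_concat, hw]⟩

lemma bt_dist (x : List Bool) : binaryTree.dist [] x = x.length := by
  obtain ⟨w, hw⟩ := bt_walk_exists x
  refine le_antisymm (hw ▸ SimpleGraph.dist_le w) ?_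
  obtain ⟨w', hw'⟩ := Reachable.exists_walk_length_eq_dist ⟨w⟩ (u := ([] : List Bool)) (v := x)
  have := bt_walk_length w'
  simpa [hw'] using this

lemma card_sphere (n : ℕ) : Set.ncard {x : List Bool | x.length = n} = 2 ^ n := by
  rw [← Nat.card_coe_set_eq]
  have : Nat.card (List.Vector Bool n) = 2 ^ n := by
    rw [Nat.card_eq_fintype_card, card_vector]; simp
  exact this

/-- if every vertex of the sphere of radius n of the binary tree is
mapped within distance σ(n) of the image of the root by a map satisfying the
`x^{y^s}` gentleness bound, then σ(n) ≥ (1/C)·((n log 2 − log C)/log(Cn))^{1/s}. -/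
theorem stmt_5
    {Z : Type*} [MetricSpace Z] (s : ℕ) (hs : 1 ≤ s)
    (φ : List Bool → Z) (C : ℝ) (hC : 1 < C) (n : ℕ) (hn : 1 ≤ n)
    (σn : ℝ) (hσ : 0 < σn)
    (hlog : Real.log C ≤ (n : ℝ) * Real.log 2)
    (hgentle : ∀ r : ℝ, 0 ≤ r →
      (({x : List Bool | (binaryTree.dist [] x : ℝ) ≤ (n : ℝ)}
          ∩ φ ⁻¹' closedBall (φ []) r).ncard : ℝ)
        ≤ C * (C * (n : ℝ)) ^ ((C * r) ^ s))
    (hsmall : ∀ x : List Bool, binaryTree.dist [] x = n → dist (φ []) (φ x) < σn) :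
    (1 / C) * (((n : ℝ) * Real.log 2 - Real.log C) / Real.log (C * n)) ^ ((1 : ℝ) / s)
      ≤ σn := by
  have hC0 : (0:ℝ) < C := lt_trans one_pos hC
  set B := {x : List Bool | (binaryTree.dist [] x : ℝ) ≤ (n : ℝ)}
      ∩ φ ⁻¹' closedBall (φ []) σn with hB
  -- the sphere is inside B
  have hsub : {x : List Bool | x.length = n} ⊆ B := by
    intro x hx
    have hd : binaryTree.dist [] x = n := by rw [bt_dist]; exact hx
    constructor
    · simp [Set.mem_setOf_eq, hd]
    · simp only [Set.mem_preimage, Metric.mem_closedBall]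
      rw [_root_.dist_comm]
      exact (hsmall x hd).le
  have hfin : B.Finite := by
    apply (List.finite_length_le Bool n).subset
    intro x hx
    have := hx.1
    simp only [Set.mem_setOf_eq, bt_dist, Nat.cast_le] at this ⊢
    exact this
  have hcard : (2:ℝ) ^ n ≤ (B.ncard : ℝ) := by
    have := Set.ncard_le_ncard hsub hfin
    rw [card_sphere] at this
    exact_mod_cast this
  have key : (2:ℝ) ^ n ≤ C * (C * (n : ℝ)) ^ ((C * σn) ^ s) :=
    le_trans hcard (hgentle σn hσ.le)
  -- positivity
  have hn1 : (1:ℝ) ≤ (n:ℝ) := by exact_mod_cast hn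
  have hCn1 : (1:ℝ) < C * n := by nlinarith
  have hCn0 : (0:ℝ) < C * n := lt_trans one_pos hCn1
  have hlogCn : 0 < Real.log (C * n) := Real.log_pos hCn1
  have hrpow0 : (0:ℝ) < (C * (n : ℝ)) ^ ((C * σn) ^ s) := Real.rpow_pos_of_pos hCn0 _
  -- take logs
  have hlogkey : (n:ℝ) * Real.log 2 ≤ Real.log C + (C * σn) ^ s * Real.log (C * n) := by
    have h1 := Real.log_le_log (by positivity) key
    rwa [Real.log_pow, Real.log_mul (ne_of_gt hC0) (ne_of_gt hrpow0),
      Real.log_rpow hCn0] at h1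
  set A := ((n : ℝ) * Real.log 2 - Real.log C) / Real.log (C * n) with hA
  have hA0 : 0 ≤ A := div_nonneg (by linarith) hlogCn.le
  have hAle : A ≤ (C * σn) ^ s := by
    rw [hA, div_le_iff₀ hlogCn]; linarith
  have hs0 : (s:ℝ) ≠ 0 := by positivity
  have hfinal : A ^ ((1:ℝ)/s) ≤ C * σn := by
    calc A ^ ((1:ℝ)/s) ≤ ((C * σn) ^ s) ^ ((1:ℝ)/s) :=
          Real.rpow_le_rpow hA0 hAle (by positivity)
      _ = C * σn := by
          rw [← Real.rpow_natCast (C * σn) s, ← Real.rpow_mul (by positivity),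
            mul_one_div, div_self hs0, Real.rpow_one]
  rw [div_mul_eq_mul_div, div_le_iff₀ hC0, one_mul]
  linarith
end

section
/- In the lamplighter graph Lamp, for every vertex (S,p) with S ⊆ [0,p] and p ≥ 0, the vertices (∅,0) and (S,p) are exponentially (2^{1/4}, 6)-connected: for every R with 6 ≤ R < d((∅,0),(S,p))/2, there exist at least (2^{1/4})^R paths α₁,…,α_N from (∅,0) to (S,p), each of length at most 6·d((∅,0),(S,p)), such that the portions of the αᵢ outside the R-balls around the two endpoints are pairwise disjoint. -/
/-!
Fix `k = ⌈R/4⌉` and a pattern `D ⊆ [1,k]`. Let `Y` (`returnConfig`) be `S` with the block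
`[p-k, p]` replaced by a marker lamp at `p-k` followed by the copy `D + (p-k)`, and let `X`
(`turnConfig`) be `Y` with `[1,k]` replaced by `D`. The walk for `D` sweeps right from `(∅,0)`
lighting `X`, sweeps back to `(Y,0)` switching `[1,k]` to its final state, and sweeps right again
to `(S,p)`; its length is at most `4p + 2k + 2 ≤ 6p ≤ 6d`. At every vertex of this walk whose
lamplighter lies strictly between `k` and `p-k`, the pattern `D` can be read off: from the copy
behind the marker if the marker is lit ahead of the lamplighter, and from `[1,k]` otherwise.
Vertices of the walk outside that window are within distance `2k+1 ≤ R` of an endpoint, so the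
`2^k ≥ 2^{R/4}` walks are pairwise disjoint outside the `R`-balls.
-/

open SimpleGraph

/-- The lamplighter graph: vertices are pairs (S,p) with S ⊂ ℤ finite and p ∈ ℤ;
edges connect (S,p) to (S,p±1), and (S,p) to (S △ {p}, p). -/
def lampGraph : SimpleGraph (Finset ℤ × ℤ) :=
  SimpleGraph.fromRel (fun v w =>
    (v.1 = w.1 ∧ (w.2 = v.2 + 1 ∨ v.2 = w.2 + 1)) ∨
    (v.2 = w.2 ∧ w.1 = symmDiff v.1 {v.2}))

namespace Lamplighter

open Finset

lemma adj_succ (A : Finset ℤ) (q : ℤ) : lampGraph.Adj (A, q) (A, q + 1) := by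
  simp [lampGraph]

lemma adj_toggle (A : Finset ℤ) (q : ℤ) : lampGraph.Adj (A, q) (symmDiff A {q}, q) := by
  refine (SimpleGraph.fromRel_adj _ _ _).2 ⟨fun h => ?_, Or.inl (Or.inr ⟨rfl, rfl⟩)⟩
  have hq := congrArg (q ∈ ·.1) h
  simp [mem_symmDiff] at hq

lemma snd_le_of_adj {u v : Finset ℤ × ℤ} (h : lampGraph.Adj u v) : v.2 ≤ u.2 + 1 := by
  rw [lampGraph, SimpleGraph.fromRel_adj] at h
  rcases h.2 with (⟨_, h2⟩ | ⟨h2, _⟩) | (⟨_, h2⟩ | ⟨h2, _⟩) <;> omega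

lemma snd_le_add_length {u w : Finset ℤ × ℤ} (W : lampGraph.Walk u w) :
    w.2 ≤ u.2 + W.length := by
  induction W with
  | nil => simp
  | cons h _ ih => have := snd_le_of_adj h; push_cast [Walk.length_cons]; omega

lemma exists_mem_support_snd_eq {u w : Finset ℤ × ℤ} (W : lampGraph.Walk u w) {r : ℤ}
    (hu : u.2 ≤ r) (hw : r ≤ w.2) : ∃ v ∈ W.support, v.2 = r := by
  induction W with
  | nil => exact ⟨_, Walk.start_mem_support _, le_antisymm hu hw⟩
  | @cons a b c h W ih =>
    rcases hu.eq_or_lt with rfl | hlt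
    · exact ⟨a, Walk.start_mem_support _, rfl⟩
    · obtain ⟨v, hv, rfl⟩ := ih (by have := snd_le_of_adj h; omega) hw
      exact ⟨v, List.mem_cons_of_mem _ hv, rfl⟩

def splice (B A : Finset ℤ) (t : ℤ) : Finset ℤ :=
  B.filter (· < t) ∪ A.filter (t ≤ ·)

lemma mem_splice_of_lt {B A : Finset ℤ} {t x : ℤ} (hx : x < t) :
    x ∈ splice B A t ↔ x ∈ B := by
  simp [splice, hx, not_le.2 hx]

lemma mem_splice_of_le {B A : Finset ℤ} {t x : ℤ} (hx : t ≤ x) :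
    x ∈ splice B A t ↔ x ∈ A := by
  simp [splice, hx, not_lt.2 hx]

lemma splice_splice_of_le (B A : Finset ℤ) {s t : ℤ} (hst : s ≤ t) :
    splice B (splice B A s) t = splice B A t := by
  ext x
  rcases lt_or_ge x t with hx | hx
  · rw [mem_splice_of_lt hx, mem_splice_of_lt hx]
  · rw [mem_splice_of_le hx, mem_splice_of_le hx, mem_splice_of_le (hst.trans hx)]

lemma splice_eq_self {B A : Finset ℤ} {t : ℤ} (h : ∀ x < t, x ∈ A ↔ x ∈ B) :
    splice B A t = A := by
  ext x
  rcases lt_or_ge x t with hx | hx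
  · rw [mem_splice_of_lt hx, h x hx]
  · rw [mem_splice_of_le hx]

section SetLamp

variable {A B : Finset ℤ} {q : ℤ}

lemma symmDiff_splice_add_one (hAB : ∀ x < q, x ∈ A ↔ x ∈ B) :
    symmDiff (splice B A (q + 1)) B = (symmDiff A B).erase q := by
  ext x
  obtain hx | rfl | hx := lt_trichotomy x q
  · simp only [mem_symmDiff, mem_erase, mem_splice_of_lt (hx.trans (lt_add_one q)), hAB x hx]
    tauto
  · simp only [mem_symmDiff, mem_erase, mem_splice_of_lt (lt_add_one x)]
    tauto
  · simp only [mem_symmDiff, mem_erase, mem_splice_of_le (show q + 1 ≤ x by omega), ne_eq,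
      hx.ne', not_false_eq_true, true_and]

lemma splice_add_one_eq_symmDiff (hAB : ∀ x < q, x ∈ A ↔ x ∈ B) (hq : q ∈ symmDiff A B) :
    splice B A (q + 1) = symmDiff A {q} := by
  rw [mem_symmDiff] at hq
  ext x
  obtain hx | rfl | hx := lt_trichotomy x q
  · simp [mem_splice_of_lt (hx.trans (lt_add_one q)), mem_symmDiff, hAB x hx, hx.ne]
  · simp only [mem_splice_of_lt (lt_add_one x), mem_symmDiff, mem_singleton,
      not_true_eq_false, and_false, true_and]
    tauto
  · simp [mem_splice_of_le (show q + 1 ≤ x by omega), mem_symmDiff, hx.ne']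

lemma splice_add_one_eq_self (hAB : ∀ x < q, x ∈ A ↔ x ∈ B) (hq : q ∉ symmDiff A B) :
    splice B A (q + 1) = A := by
  refine splice_eq_self fun x hx => ?_
  rcases (Int.lt_add_one_iff.1 hx).lt_or_eq with hx | rfl
  · exact hAB x hx
  · rw [mem_symmDiff] at hq; tauto

/-- The lamp under the lamplighter may or may not have been set yet, hence the two values
of the cut `t`. -/
def IsSweepState (A B : Finset ℤ) (v : Finset ℤ × ℤ) : Prop :=
  ∃ t, v.2 ≤ t ∧ t ≤ v.2 + 1 ∧ v.1 = splice B A t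

lemma exists_walk_set_lamp (hAB : ∀ x < q, x ∈ A ↔ x ∈ B) :
    ∃ W : lampGraph.Walk (A, q) (splice B A (q + 1), q),
      W.length + (symmDiff (splice B A (q + 1)) B).card ≤ (symmDiff A B).card ∧
      ∀ v ∈ W.support, v.2 = q ∧ IsSweepState A B v := by
  have hstart : IsSweepState A B (A, q) := ⟨q, le_rfl, by omega, (splice_eq_self hAB).symm⟩
  have hset : IsSweepState A B (splice B A (q + 1), q) := ⟨q + 1, by simp, le_rfl, rfl⟩
  rw [symmDiff_splice_add_one hAB]
  by_cases hq : q ∈ symmDiff A B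
  · have hend := splice_add_one_eq_symmDiff hAB hq
    refine ⟨(Walk.cons (adj_toggle A q) Walk.nil).copy rfl (by rw [hend]), ?_, fun v hv => ?_⟩
    · rw [Walk.length_copy, card_erase_of_mem hq, Walk.length_cons, Walk.length_nil]
      have := card_pos.2 ⟨q, hq⟩
      omega
    · simp only [Walk.support_copy, Walk.support_cons, Walk.support_nil, List.mem_cons,
        List.not_mem_nil, or_false] at hv
      rcases hv with rfl | rfl
      exacts [⟨rfl, hstart⟩, ⟨rfl, hend ▸ hset⟩]
  · refine ⟨Walk.nil.copy rfl (by rw [splice_add_one_eq_self hAB hq]), ?_, fun v hv => ?_⟩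
    · rw [erase_eq_of_notMem hq, Walk.length_copy, Walk.length_nil, zero_add]
    · simp only [Walk.support_copy, Walk.support_nil, List.mem_cons, List.not_mem_nil,
        or_false] at hv
      exact hv ▸ ⟨rfl, hstart⟩

end SetLamp

lemma mem_iff_mem_of_symmDiff_subset {A B s : Finset ℤ} (h : symmDiff A B ⊆ s) {x : ℤ}
    (hx : x ∉ s) : x ∈ A ↔ x ∈ B := by
  by_contra hne
  exact hx (h (by rw [mem_symmDiff]; tauto))

theorem exists_sweep_walk {A B : Finset ℤ} {q q' : ℤ} (hq : q ≤ q')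
    (hAB : symmDiff A B ⊆ Icc q q') :
    ∃ W : lampGraph.Walk (A, q) (B, q'),
      (W.length : ℤ) ≤ q' - q + (symmDiff A B).card ∧
      ∀ v ∈ W.support, q ≤ v.2 ∧ v.2 ≤ q' ∧ IsSweepState A B v := by
  obtain ⟨n, rfl⟩ : ∃ n : ℕ, q' = q + n := ⟨(q' - q).toNat, by omega⟩
  clear hq
  induction n generalizing q A with
  | zero =>
    have hagree : ∀ x, x ≠ q → (x ∈ A ↔ x ∈ B) := fun x hx =>
      mem_iff_mem_of_symmDiff_subset hAB (by rw [mem_Icc]; omega)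
    obtain ⟨T, hTlen, hTsupp⟩ := exists_walk_set_lamp fun x hx => hagree x hx.ne
    have hend : splice B A (q + 1) = B := by
      ext x
      rcases lt_or_ge x (q + 1) with hx | hx
      · exact mem_splice_of_lt hx
      · rw [mem_splice_of_le hx, hagree x (by omega)]
    refine ⟨T.copy rfl (by rw [hend]; simp), ?_, fun v hv => ?_⟩
    · rw [Walk.length_copy]; push_cast; omega
    · obtain ⟨hv2, hvs⟩ := hTsupp v (by simpa using hv)
      exact ⟨hv2.ge, by simp [hv2], hvs⟩
  | succ n ih =>
    have hbelow : ∀ x < q, x ∈ A ↔ x ∈ B := fun x hx =>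
      mem_iff_mem_of_symmDiff_subset hAB (by rw [mem_Icc]; omega)
    obtain ⟨T, hTlen, hTsupp⟩ := exists_walk_set_lamp hbelow
    have hA' : symmDiff (splice B A (q + 1)) B ⊆ Icc (q + 1) (q + 1 + n) := by
      rw [symmDiff_splice_add_one hbelow]
      intro x hx
      have := mem_Icc.1 (hAB (mem_of_mem_erase hx))
      have := ne_of_mem_erase hx
      rw [mem_Icc]
      omega
    obtain ⟨W, hWlen, hWsupp⟩ := ih hA'
    refine ⟨(T.append (Walk.cons (adj_succ _ q) W)).copy rfl (by push_cast; ring_nf), ?_, ?_⟩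
    · rw [Walk.length_copy, Walk.length_append, Walk.length_cons]; push_cast; omega
    · intro v hv
      rw [Walk.support_copy, Walk.mem_support_append_iff, Walk.support_cons,
        List.mem_cons] at hv
      rcases hv with hv | rfl | hv
      · obtain ⟨hv2, hvs⟩ := hTsupp v hv
        exact ⟨hv2.ge, by omega, hvs⟩
      · exact ⟨by simp, by simp only; omega, q + 1, by simp, le_rfl, rfl⟩
      · obtain ⟨h1, h2, t, ht1, ht2, hvt⟩ := hWsupp v hv
        refine ⟨by omega, by omega, t, ht1, ht2, ?_⟩
        rw [hvt, splice_splice_of_le B A (by omega : q + 1 ≤ t)]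

lemma dist_le_of_symmDiff_subset_Icc {A B : Finset ℤ} {q q' : ℤ} (hq : q ≤ q')
    (hAB : symmDiff A B ⊆ Icc q q') :
    (lampGraph.dist (A, q) (B, q') : ℤ) ≤ 2 * (q' - q) + 1 := by
  obtain ⟨W, hW, -⟩ := exists_sweep_walk hq hAB
  have hcard := card_le_card hAB
  rw [Int.card_Icc] at hcard
  have := lampGraph.dist_le W
  omega

lemma sub_snd_le_dist {u w : Finset ℤ × ℤ} (h : lampGraph.Reachable u w) :
    w.2 - u.2 ≤ lampGraph.dist u w := by
  obtain ⟨W, hW⟩ := h.exists_walk_length_eq_dist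
  have := snd_le_add_length W
  omega

section Code

variable (S : Finset ℤ) (p : ℤ) (k : ℕ) (D : Finset ℤ)

noncomputable def returnConfig : Finset ℤ :=
  S \ Icc (p - k) p ∪ insert (p - k) (D.image (· + (p - k)))

noncomputable def turnConfig : Finset ℤ :=
  returnConfig S p k D \ Icc 1 (k : ℤ) ∪ D

noncomputable def decode (v : Finset ℤ × ℤ) : Finset ℤ :=
  (Icc 1 (k : ℤ)).filter fun x =>
    x + (if v.2 < p - k ∧ p - k ∈ v.1 then p - k else 0) ∈ v.1

variable {S p k D}

lemma marker_mem_returnConfig : p - k ∈ returnConfig S p k D := by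
  simp [returnConfig]

lemma add_mem_returnConfig_iff {x : ℤ} (hx : x ∈ Icc 1 (k : ℤ)) :
    x + (p - k) ∈ returnConfig S p k D ↔ x ∈ D := by
  simp only [mem_Icc] at hx
  simp only [returnConfig, mem_union, mem_sdiff, mem_Icc, mem_insert, mem_image]
  constructor
  · rintro (⟨-, h⟩ | h | ⟨y, hy, hyx⟩)
    · omega
    · omega
    · rwa [show x = y by omega]
  · exact fun h => Or.inr (Or.inr ⟨x, h, rfl⟩)

lemma symmDiff_returnConfig_subset (hD : D ⊆ Icc 1 (k : ℤ)) :
    symmDiff (returnConfig S p k D) S ⊆ Icc (p - k) p := by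
  intro x hx
  by_contra hxI
  refine (mem_symmDiff.1 hx).elim (fun h => h.2 ?_) (fun h => h.2 ?_)
  · simp only [returnConfig, mem_union, mem_sdiff, mem_insert, mem_image] at h
    rcases h.1 with h | rfl | ⟨y, hy, rfl⟩
    · exact h.1
    · simp at hxI
    · have := mem_Icc.1 (hD hy)
      rw [mem_Icc] at hxI
      omega
  · simp [returnConfig, h, hxI]

lemma returnConfig_subset (hS : S ⊆ Icc 0 p) (hD : D ⊆ Icc 1 (k : ℤ)) (hkp : (k : ℤ) ≤ p) :
    returnConfig S p k D ⊆ Icc 0 p := by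
  intro x hx
  by_cases hxS : x ∈ S
  · exact hS hxS
  · have := symmDiff_returnConfig_subset hD (mem_symmDiff.2 (Or.inl ⟨hx, hxS⟩))
    simp only [mem_Icc] at this ⊢
    omega

lemma mem_turnConfig_of_mem {x : ℤ} (hx : x ∈ Icc 1 (k : ℤ)) :
    x ∈ turnConfig S p k D ↔ x ∈ D := by
  simp [turnConfig, hx]

lemma symmDiff_turnConfig_subset (hD : D ⊆ Icc 1 (k : ℤ)) :
    symmDiff (returnConfig S p k D) (turnConfig S p k D) ⊆ Icc 1 (k : ℤ) := by
  intro x hx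
  by_contra hxI
  simp only [turnConfig, mem_symmDiff, mem_union, mem_sdiff] at hx
  have := fun h => hxI (hD h)
  tauto

lemma turnConfig_subset (hS : S ⊆ Icc 0 p) (hD : D ⊆ Icc 1 (k : ℤ)) (hkp : (k : ℤ) ≤ p) :
    turnConfig S p k D ⊆ Icc 0 p := by
  intro x hx
  rcases mem_union.1 hx with h | h
  · exact returnConfig_subset hS hD hkp (mem_sdiff.1 h).1
  · have := mem_Icc.1 (hD h); simp only [mem_Icc]; omega

lemma decode_splice_turnConfig (hD : D ⊆ Icc 1 (k : ℤ)) {A : Finset ℤ} {r t : ℤ}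
    (hkt : (k : ℤ) < t) (hcond : ¬(r < p - k ∧ p - k ∈ splice (turnConfig S p k D) A t)) :
    decode p k (splice (turnConfig S p k D) A t, r) = D := by
  ext x
  simp only [decode, mem_filter, if_neg hcond, add_zero]
  refine ⟨fun ⟨hx, hxs⟩ => ?_, fun hxD => ⟨hD hxD, ?_⟩⟩
  · rwa [mem_splice_of_lt (by linarith [(mem_Icc.1 hx).2]), mem_turnConfig_of_mem hx] at hxs
  · rwa [mem_splice_of_lt (by linarith [(mem_Icc.1 (hD hxD)).2]),
      mem_turnConfig_of_mem (hD hxD)]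

lemma decode_splice_returnConfig (hD : D ⊆ Icc 1 (k : ℤ)) {B : Finset ℤ} {r t : ℤ}
    (hr : r < p - k) (ht : t ≤ r + 1) :
    decode p k (splice B (returnConfig S p k D) t, r) = D := by
  have hcond : r < p - k ∧ p - k ∈ splice B (returnConfig S p k D) t :=
    ⟨hr, (mem_splice_of_le (by omega)).2 marker_mem_returnConfig⟩
  ext x
  simp only [decode, mem_filter, if_pos hcond]
  refine ⟨fun ⟨hx, hxs⟩ => ?_, fun hxD => ⟨hD hxD, ?_⟩⟩
  · rwa [mem_splice_of_le (by linarith [(mem_Icc.1 hx).1]), add_mem_returnConfig_iff hx] at hxs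
  · rwa [mem_splice_of_le (by linarith [(mem_Icc.1 (hD hxD)).1]),
      add_mem_returnConfig_iff (hD hxD)]

lemma decode_or_near_start (hS : S ⊆ Icc 0 p) (hD : D ⊆ Icc 1 (k : ℤ)) (hkp : (k : ℤ) ≤ p)
    {v : Finset ℤ × ℤ} (hv : IsSweepState ∅ (turnConfig S p k D) v) (h0 : 0 ≤ v.2) :
    decode p k v = D ∨ v.2 ≤ k ∧ (lampGraph.dist (∅, 0) v : ℤ) ≤ 2 * k + 1 := by
  obtain ⟨C, r⟩ := v
  obtain ⟨t, hrt, htr, rfl⟩ := hv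
  dsimp only at hrt htr h0 ⊢
  have hlt : ∀ x ∈ splice (turnConfig S p k D) ∅ t, x < t := fun x hx => by
    by_contra! hxt
    simp [mem_splice_of_le hxt] at hx
  by_cases hrk : r ≤ k
  · refine Or.inr ⟨hrk, ?_⟩
    have hsub : symmDiff ∅ (splice (turnConfig S p k D) ∅ t) ⊆ Icc 0 r := by
      intro x hx
      rw [← bot_eq_empty, bot_symmDiff] at hx
      have := mem_Icc.1 (turnConfig_subset hS hD hkp ((mem_splice_of_lt (hlt x hx)).1 hx))
      have := hlt x hx
      simp only [mem_Icc]
      omega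
    have := dist_le_of_symmDiff_subset_Icc h0 hsub
    omega
  · refine Or.inl (decode_splice_turnConfig hD (by omega) fun ⟨hr, hmem⟩ => ?_)
    have := hlt _ hmem
    omega

lemma decode_of_isSweepState_returnConfig_turnConfig (hD : D ⊆ Icc 1 (k : ℤ))
    (hkp : (k : ℤ) < p - k) {v : Finset ℤ × ℤ}
    (hv : IsSweepState (returnConfig S p k D) (turnConfig S p k D) v) :
    decode p k v = D := by
  obtain ⟨C, r⟩ := v
  obtain ⟨t, hrt, htr, rfl⟩ := hv
  dsimp only at hrt htr ⊢
  by_cases hr : r < p - k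
  · exact decode_splice_returnConfig hD hr htr
  · exact decode_splice_turnConfig hD (by omega) fun h => hr h.1

lemma decode_or_near_end (hD : D ⊆ Icc 1 (k : ℤ)) {v : Finset ℤ × ℤ}
    (hv : IsSweepState (returnConfig S p k D) S v) (hp : v.2 ≤ p) :
    decode p k v = D ∨ p - k ≤ v.2 ∧ (lampGraph.dist (S, p) v : ℤ) ≤ 2 * k + 1 := by
  obtain ⟨C, r⟩ := v
  obtain ⟨t, hrt, htr, rfl⟩ := hv
  dsimp only at hrt htr hp ⊢
  by_cases hr : r < p - k
  · exact Or.inl (decode_splice_returnConfig hD hr htr)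
  · refine Or.inr ⟨by omega, ?_⟩
    have hsub : symmDiff (splice S (returnConfig S p k D) t) S ⊆ Icc r p := by
      intro x hx
      rcases lt_or_ge x t with hxt | hxt
      · simp [mem_symmDiff, mem_splice_of_lt hxt] at hx
      · rw [mem_symmDiff, mem_splice_of_le hxt, ← mem_symmDiff] at hx
        have := mem_Icc.1 (symmDiff_returnConfig_subset hD hx)
        simp only [mem_Icc]
        omega
    have := dist_le_of_symmDiff_subset_Icc hp hsub
    rw [dist_comm]
    omega

lemma exists_codeWalk (hS : S ⊆ Icc 0 p) (hD : D ⊆ Icc 1 (k : ℤ)) (hkp : (k : ℤ) < p - k) :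
    ∃ W : lampGraph.Walk (∅, 0) (S, p), (W.length : ℤ) ≤ 4 * p + 2 * k + 2 ∧
      ∀ v ∈ W.support, decode p k v = D ∨
        v.2 ≤ k ∧ (lampGraph.dist (∅, 0) v : ℤ) ≤ 2 * k + 1 ∨
        p - k ≤ v.2 ∧ (lampGraph.dist (S, p) v : ℤ) ≤ 2 * k + 1 := by
  have hp : 0 ≤ p := by omega
  have hX := turnConfig_subset hS hD (by omega : (k : ℤ) ≤ p)
  have hXY := symmDiff_turnConfig_subset (S := S) (p := p) hD
  have hYS := symmDiff_returnConfig_subset (S := S) (p := p) hD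
  obtain ⟨W₁, hW₁, hs₁⟩ := exists_sweep_walk hp (A := ∅) (B := turnConfig S p k D)
    (by rwa [← bot_eq_empty, bot_symmDiff])
  obtain ⟨W₂, hW₂, hs₂⟩ := exists_sweep_walk hp
    (hXY.trans (Icc_subset_Icc (by omega) (by omega)))
  obtain ⟨W₃, hW₃, hs₃⟩ := exists_sweep_walk hp (hYS.trans (Icc_subset_Icc (by omega) le_rfl))
  refine ⟨W₁.append (W₂.reverse.append W₃), ?_, fun v hv => ?_⟩
  · have h₁ := card_le_card hX
    have h₂ := card_le_card hXY
    have h₃ := card_le_card hYS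
    simp only [Int.card_Icc, ← bot_eq_empty, bot_symmDiff] at h₁ h₂ h₃ hW₁
    simp only [Walk.length_append, Walk.length_reverse]
    push_cast
    omega
  rw [Walk.mem_support_append_iff, Walk.mem_support_append_iff, Walk.support_reverse,
    List.mem_reverse] at hv
  rcases hv with hv | hv | hv
  · obtain ⟨h0, -, hv⟩ := hs₁ v hv
    rcases decode_or_near_start hS hD (by omega) hv h0 with h | h
    exacts [Or.inl h, Or.inr (Or.inl h)]
  · exact Or.inl (decode_of_isSweepState_returnConfig_turnConfig hD hkp (hs₂ v hv).2.2)
  · obtain ⟨-, hvp, hv⟩ := hs₃ v hv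
    rcases decode_or_near_end hD hv hvp with h | h
    exacts [Or.inl h, Or.inr (Or.inr h)]

end Code

theorem exists_walk_family {S : Finset ℤ} {p : ℤ} {k : ℕ} (hS : S ⊆ Icc 0 p)
    (hkp : 2 * k + 2 ≤ p) :
    ∃ α : Fin (2 ^ k) → lampGraph.Walk (∅, 0) (S, p), Function.Injective α ∧
      (∀ i, ((α i).length : ℤ) ≤ 6 * p) ∧
      ∀ i j, i ≠ j → ∀ v ∈ (α i).support, v ∈ (α j).support →
        (lampGraph.dist (∅, 0) v : ℤ) ≤ 2 * k + 1 ∨ (lampGraph.dist (S, p) v : ℤ) ≤ 2 * k + 1 := by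
  have hcard : ((Icc (1 : ℤ) k).powerset).card = 2 ^ k := by simp [Int.card_Icc]
  set e := (equivFinOfCardEq hcard).symm
  have hW := fun D : (Icc (1 : ℤ) k).powerset =>
    exists_codeWalk (D := D.1) hS (mem_powerset.1 D.2) (by omega)
  choose W hWlen hWsupp using hW
  have hdecode : ∀ D v, v ∈ (W D).support → (k : ℤ) < v.2 → v.2 < p - k → decode p k v = D := by
    intro D v hv h1 h2
    rcases hWsupp D v hv with h | h | h
    exacts [h, by omega, by omega]
  refine ⟨fun i => W (e i), fun i j hij => e.injective (Subtype.ext ?_), fun i => ?_,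
    fun i j hij v hvi hvj => ?_⟩
  · obtain ⟨v, hv, hv2⟩ := exists_mem_support_snd_eq (W (e i)) (r := k + 1) (by simp only; omega)
      (by simp only; omega)
    have hvj : v ∈ (W (e j)).support := (congrArg Walk.support hij : _) ▸ hv
    rw [← hdecode _ v hv (by omega) (by omega), ← hdecode _ v hvj (by omega) (by omega)]
  · have := hWlen (e i); dsimp only; omega
  · rcases hWsupp (e i) v hvi with hi | hi | hi
    · rcases hWsupp (e j) v hvj with hj | hj | hj
      · exact absurd (e.injective (Subtype.ext (hi.symm.trans hj))) hij
      · exact Or.inl hj.2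
      · exact Or.inr hj.2
    · exact Or.inl hi.2
    · exact Or.inr hi.2

lemma two_mul_ceil_div_four_add_two_le {R : ℝ} (hR : 6 ≤ R) : 2 * (⌈R / 4⌉₊ : ℝ) + 2 ≤ R := by
  have hlt := Nat.ceil_lt_add_one (show 0 ≤ R / 4 by linarith)
  rcases le_or_gt ⌈R / 4⌉₊ 2 with h | h
  · have : (⌈R / 4⌉₊ : ℝ) ≤ 2 := by exact_mod_cast h
    linarith
  · have : (3 : ℝ) ≤ ⌈R / 4⌉₊ := by exact_mod_cast h
    linarith

end Lamplighter

open Lamplighter in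
/-- for every vertex (S,p) with S ⊆ [0,p], the vertices (∅,0) and
(S,p) of the lamplighter graph are exponentially (2^{1/4},6)-connected. -/
theorem stmt_7 (S : Finset ℤ) (p : ℤ) (hp : 0 ≤ p) (hS : S ⊆ Finset.Icc 0 p) :
    ∀ R : ℝ, 6 ≤ R → R < (lampGraph.dist (∅, 0) (S, p) : ℝ) / 2 →
      ∃ (N : ℕ) (α : Fin N → lampGraph.Walk (∅, (0 : ℤ)) (S, p)),
        (((2 : ℝ) ^ ((1 : ℝ) / 4)) ^ R ≤ (N : ℝ)) ∧
        Function.Injective α ∧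
        (∀ i, ((α i).length : ℝ) ≤ 6 * (lampGraph.dist (∅, 0) (S, p) : ℝ)) ∧
        (∀ i j, i ≠ j → ∀ v : Finset ℤ × ℤ,
          v ∈ (α i).support → v ∈ (α j).support →
          (lampGraph.dist (∅, 0) v : ℝ) ≤ R ∨ (lampGraph.dist (S, p) v : ℝ) ≤ R) := by
  intro R hR6 hRd
  set k := ⌈R / 4⌉₊
  have hkR := two_mul_ceil_div_four_add_two_le hR6
  have hdp : (lampGraph.dist (∅, 0) (S, p) : ℤ) ≤ 2 * p + 1 := by
    simpa using dist_le_of_symmDiff_subset_Icc hp (A := ∅) (B := S)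
      (by rwa [← Finset.bot_eq_empty, bot_symmDiff])
  have hpd : p ≤ lampGraph.dist (∅, 0) (S, p) := by
    have := sub_snd_le_dist (Reachable.of_dist_ne_zero fun h => by
      rw [h] at hRd; norm_num at hRd; linarith)
    simpa using this
  have hkp : 2 * (k : ℤ) + 2 ≤ p := by
    have : (lampGraph.dist (∅, 0) (S, p) : ℝ) ≤ 2 * p + 1 := by exact_mod_cast hdp
    have : (2 * (k : ℤ) + 2 : ℝ) < p + 1 := by push_cast; linarith
    exact Int.lt_add_one_iff.1 (by exact_mod_cast this)
  obtain ⟨α, hinj, hlen, hdisj⟩ := exists_walk_family hS hkp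
  refine ⟨2 ^ k, α, ?_, hinj, fun i => ?_, fun i j hij v hvi hvj => ?_⟩
  · rw [← Real.rpow_mul zero_le_two, Nat.cast_pow, Nat.cast_two, ← Real.rpow_natCast]
    exact Real.rpow_le_rpow_of_exponent_le one_le_two (by linarith [Nat.le_ceil (R / 4)])
  · have : ((α i).length : ℤ) ≤ 6 * lampGraph.dist (∅, 0) (S, p) := by linarith [hlen i]
    exact_mod_cast this
  · rcases hdisj i j hij v hvi hvj with h | h
    · left; have : (lampGraph.dist (∅, 0) v : ℝ) ≤ 2 * k + 1 := by exact_mod_cast h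
      linarith
    · right; have : (lampGraph.dist (S, p) v : ℝ) ≤ 2 * k + 1 := by exact_mod_cast h
      linarith
end

section
/- Every non-trivial normal subgroup of F₂ × F₂ contains a subgroup isomorphic to F₂ (the free group of rank 2). -/
/-!
Take `(a, b) ∈ N` with, say, `a ≠ 1`. Since `F₂` has trivial centre, some commutator
`([x, a], 1)` is a nontrivial element of `N`, so `K = {y | (y, 1) ∈ N}` is a nontrivial normal
subgroup of `F₂`. By Nielsen–Schreier `K` is free; it is either cyclic or has two distinct basis
elements, which generate a copy of `F₂`. It cannot be cyclic: conjugation acts on a normal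
infinite cyclic subgroup `⟨k⟩` by `k ↦ k^{±1}`, so every square `g²` commutes with `k`. Commuting
elements of a free group are powers of a common element, and comparing exponent sums then shows
that only `k = 1` commutes with a power of every generator.
-/

open Subgroup

namespace FreeGroup

variable {α : Type*}

theorem eq_of_commute_of {a b : α} (h : Commute (of a) (of b)) : a = b := by
  classical
  have toWord_of_mul_of (x y : α) : (of x * of y).toWord = [(x, true), (y, true)] := by
    rw [toWord_mul, toWord_of, toWord_of]
    exact IsReduced.reduce_eq (by simp [IsReduced])
  have := congrArg toWord h.eq
  simp only [toWord_of_mul_of, List.cons.injEq, Prod.mk.injEq] at this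
  exact this.1.1

end FreeGroup

namespace IsFreeGroup

variable {G : Type*} [Group G] [IsFreeGroup G]

theorem subsingleton_generators [IsMulCommutative G] : Subsingleton (Generators G) :=
  ⟨fun a b => FreeGroup.eq_of_commute_of <| by
    simpa [IsFreeGroup.of, Commute, SemiconjBy] using
      congrArg (toFreeGroup G) (mul_comm' (of a) (of b))⟩

theorem isCyclic_of_subsingleton_generators [Subsingleton (Generators G)] : IsCyclic G := by
  rw [(toFreeGroup G).isCyclic]
  rcases isEmpty_or_nonempty (Generators G) with _ | ⟨⟨s⟩⟩
  · exact isCyclic_of_subsingleton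
  · have := uniqueOfSubsingleton s
    infer_instance

theorem exists_mem_zpowers_of_commute {x y : G} (h : Commute x y) :
    ∃ g : G, x ∈ zpowers g ∧ y ∈ zpowers g := by
  have : IsMulCommutative (closure {x, y}) := isMulCommutative_closure <| by
    rintro a (rfl | rfl) b (rfl | rfl)
    exacts [rfl, h.eq, h.symm.eq, rfl]
  have := subsingleton_generators (G := closure {x, y})
  obtain ⟨g, hg⟩ := (closure {x, y}).isCyclic_iff_exists_zpowers_eq_top.mp
    isCyclic_of_subsingleton_generators
  exact ⟨g, hg ▸ subset_closure (by simp), hg ▸ subset_closure (by simp)⟩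

theorem exists_injective_of_not_isMulCommutative (h : ¬ IsMulCommutative G) :
    ∃ f : FreeGroup (Fin 2) →* G, Function.Injective f := by
  obtain ⟨s, t, hst⟩ : ∃ s t : Generators G, s ≠ t := by
    by_contra! hsub
    have : Subsingleton (Generators G) := ⟨hsub⟩
    exact h isCyclic_of_subsingleton_generators.isMulCommutative
  exact ⟨(toFreeGroup G).symm.toMonoidHom.comp (FreeGroup.map ![s, t]),
    (toFreeGroup G).symm.injective.comp (FreeGroup.map_injective (injective_pair_iff_ne.mpr hst))⟩

end IsFreeGroup

theorem commute_sq_of_zpowers_normal {G : Type*} [Group G] [IsMulTorsionFree G] (k g : G)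
    [(zpowers k).Normal] : Commute (g ^ 2) k := by
  obtain rfl | hk := eq_or_ne k 1
  · exact Commute.one_right _
  have conj_eq (g : G) : ∃ m : ℤ, MulAut.conj g k = k ^ m := by
    obtain ⟨m, hm⟩ := mem_zpowers_iff.mp (Normal.conj_mem inferInstance k (mem_zpowers k) g)
    exact ⟨m, hm.symm⟩
  obtain ⟨m, hm⟩ := conj_eq g
  obtain ⟨m', hm'⟩ := conj_eq g⁻¹
  have h_inv : m * m' = 1 := by
    refine injective_zpow_iff_not_isOfFinOrder.mpr (not_isOfFinOrder_of_isMulTorsionFree hk) ?_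
    have : k ^ (m * m') = k := by
      rw [zpow_mul, ← hm, ← map_zpow, ← hm']
      simp [mul_assoc]
    exact this.trans (zpow_one k).symm
  have h_sq : m * m = 1 := by
    rcases Int.eq_one_or_neg_one_of_mul_eq_one h_inv with rfl | rfl <;> rfl
  refine mul_inv_eq_iff_eq_mul.mp ?_
  change MulAut.conj (g ^ 2) k = k
  rw [map_pow, pow_two, MulAut.mul_apply, hm, map_zpow, hm, ← zpow_mul, h_sq, zpow_one]

namespace FreeGroup

variable {α : Type*}

section exponentSum

variable [DecidableEq α]

def exponentSum (i : α) : FreeGroup α →* Multiplicative ℤ :=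
  FreeGroup.lift (Pi.mulSingle i (Multiplicative.ofAdd 1))

@[simp]
theorem exponentSum_of_self (i : α) : exponentSum i (of i) = Multiplicative.ofAdd 1 := by
  simp [exponentSum]

@[simp]
theorem exponentSum_of_of_ne {i j : α} (h : j ≠ i) : exponentSum i (of j) = 1 := by
  simp [exponentSum, h]

end exponentSum

variable [Nontrivial α]

theorem eq_one_of_forall_commute_of_pow {n : ℕ} (hn : n ≠ 0) {k : FreeGroup α}
    (h : ∀ i, Commute (of i ^ n) k) : k = 1 := by
  classical
  have commensurable (i : α) : ∃ q : ℤ, q ≠ 0 ∧ ∃ m : ℤ, k ^ q = of i ^ m := by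
    obtain ⟨g, ⟨q, hq⟩, ⟨p, rfl⟩⟩ := IsFreeGroup.exists_mem_zpowers_of_commute (h i)
    refine ⟨q, ?_, n * p, ?_⟩
    · rintro rfl
      simpa [hn, of_ne_one] using hq.symm
    · rw [← zpow_mul, mul_comm, zpow_mul, show g ^ q = of i ^ n from hq, ← zpow_natCast,
        ← zpow_mul]
  have exponentSum_eq_one (j : α) : exponentSum j k = 1 := by
    obtain ⟨i, hij⟩ := exists_ne j
    obtain ⟨q, hq, m, hkm⟩ := commensurable i
    have := congrArg (exponentSum j) hkm
    rw [map_zpow, map_zpow, exponentSum_of_of_ne hij, one_zpow] at this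
    exact (IsMulTorsionFree.zpow_eq_one_iff_left hq).mp this
  obtain ⟨i, -, -⟩ := exists_pair_ne α
  obtain ⟨q, hq, m, hkm⟩ := commensurable i
  have hm : m = 0 := by
    have := congrArg (exponentSum i) hkm
    rw [map_zpow, map_zpow, exponentSum_eq_one, one_zpow, exponentSum_of_self, ← ofAdd_zsmul] at this
    simpa using this.symm
  rwa [hm, zpow_zero, IsMulTorsionFree.zpow_eq_one_iff_left hq] at hkm

theorem center_eq_bot : center (FreeGroup α) = ⊥ :=
  eq_bot_iff.mpr fun k hk => eq_one_of_forall_commute_of_pow one_ne_zero fun i => by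
    rw [pow_one]
    exact mem_center_iff.mp hk (of i)

theorem eq_bot_of_normal_of_isMulCommutative (K : Subgroup (FreeGroup α)) [K.Normal]
    [IsMulCommutative K] : K = ⊥ := by
  have := IsFreeGroup.subsingleton_generators (G := K)
  obtain ⟨k, rfl⟩ :=
    K.isCyclic_iff_exists_zpowers_eq_top.mp IsFreeGroup.isCyclic_of_subsingleton_generators
  rw [eq_one_of_forall_commute_of_pow two_ne_zero fun i => commute_sq_of_zpowers_normal k (of i),
    zpowers_one_eq_bot]

theorem exists_injective_range_le_of_normal {M : Subgroup (FreeGroup α)} [M.Normal] (hM : M ≠ ⊥) :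
    ∃ f : FreeGroup (Fin 2) →* FreeGroup α, Function.Injective f ∧ f.range ≤ M := by
  obtain ⟨f, hf⟩ := IsFreeGroup.exists_injective_of_not_isMulCommutative (G := M)
    fun _ => hM (eq_bot_of_normal_of_isMulCommutative M)
  refine ⟨M.subtype.comp f, M.subtype_injective.comp hf, ?_⟩
  rintro _ ⟨x, rfl⟩
  exact (f x).2

end FreeGroup

theorem Subgroup.comap_inl_ne_bot_or_comap_inr_ne_bot {G H : Type*} [Group G] [Group H]
    (hG : center G = ⊥) (hH : center H = ⊥) {N : Subgroup (G × H)} (hnormal : N.Normal)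
    (hN : N ≠ ⊥) : N.comap (MonoidHom.inl G H) ≠ ⊥ ∨ N.comap (MonoidHom.inr G H) ≠ ⊥ := by
  obtain ⟨⟨a, b⟩, hab, hne⟩ := N.bot_or_exists_ne_one.resolve_left hN
  have commutator_mem (q : G × H) : q * (a, b) * q⁻¹ * (a, b)⁻¹ ∈ N :=
    N.mul_mem (hnormal.conj_mem _ hab q) (N.inv_mem hab)
  by_cases ha : a = 1
  · right
    have hb : b ∉ center H := by
      rw [hH, mem_bot]
      rintro rfl
      exact hne (by rw [ha]; rfl)
    obtain ⟨y, hy⟩ := not_forall.mp (mt mem_center_iff.mpr hb)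
    intro hbot
    have hmem : y * b * y⁻¹ * b⁻¹ ∈ N.comap (MonoidHom.inr G H) := by
      simpa [ha] using commutator_mem (1, y)
    rw [hbot, mem_bot, mul_inv_eq_one, mul_inv_eq_iff_eq_mul] at hmem
    exact hy hmem
  · left
    obtain ⟨x, hx⟩ := not_forall.mp (mt mem_center_iff.mpr (hG ▸ mt mem_bot.mp ha))
    intro hbot
    have hmem : x * a * x⁻¹ * a⁻¹ ∈ N.comap (MonoidHom.inl G H) := by
      simpa using commutator_mem (x, 1)
    rw [hbot, mem_bot, mul_inv_eq_one, mul_inv_eq_iff_eq_mul] at hmem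
    exact hx hmem

/-- every non-trivial normal subgroup of F₂ × F₂ contains a subgroup
isomorphic to the free group of rank 2. -/
theorem stmt_8 (N : Subgroup (FreeGroup (Fin 2) × FreeGroup (Fin 2)))
    (hnormal : N.Normal) (hN : N ≠ ⊥) :
    ∃ f : FreeGroup (Fin 2) →* FreeGroup (Fin 2) × FreeGroup (Fin 2),
      Function.Injective f ∧ f.range ≤ N := by
  have embed (ι : FreeGroup (Fin 2) →* FreeGroup (Fin 2) × FreeGroup (Fin 2))
      (hι : Function.Injective ι) (hne : N.comap ι ≠ ⊥) :
      ∃ f : FreeGroup (Fin 2) →* FreeGroup (Fin 2) × FreeGroup (Fin 2),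
        Function.Injective f ∧ f.range ≤ N := by
    have := hnormal.comap ι
    obtain ⟨f, hf, hfN⟩ := FreeGroup.exists_injective_range_le_of_normal hne
    exact ⟨ι.comp f, hι.comp hf, by rwa [MonoidHom.range_comp, map_le_iff_le_comap]⟩
  rcases comap_inl_ne_bot_or_comap_inr_ne_bot FreeGroup.center_eq_bot FreeGroup.center_eq_bot
    hnormal hN with h | h
  · exact embed _ (fun _ _ h => congrArg Prod.fst h) h
  · exact embed _ (fun _ _ h => congrArg Prod.snd h) h
end

section
/- Let X be a median graph, and let (a,b) and (x,y) be parallel pairs of vertices, i.e. for every hyperplane halfspace H: a ∈ H and b ∉ H if and only if x ∈ H and y ∉ H. Then every hyperplane separating x from a is transverse to every hyperplane separating x from y. -/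
open SimpleGraph

variable {V : Type*}

/-- A median graph: connected and every triple of vertices has a unique median. -/
def IsMedianGraph (G : SimpleGraph V) : Prop :=
  G.Connected ∧ ∀ x y z : V, ∃! m : V,
    G.dist x m + G.dist m y = G.dist x y ∧
    G.dist x m + G.dist m z = G.dist x z ∧
    G.dist y m + G.dist m z = G.dist y z

/-- A set of vertices is (geodesically) convex if it contains every vertex on a
geodesic between two of its points. -/
def GraphConvex (G : SimpleGraph V) (H : Set V) : Prop :=
  ∀ x ∈ H, ∀ y ∈ H, ∀ z : V, G.dist x z + G.dist z y = G.dist x y → z ∈ H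

/-- A halfspace of a median graph: a nonempty convex set with nonempty convex
complement (these are exactly the halfspaces delimited by hyperplanes). -/
def IsHalfspace (G : SimpleGraph V) (H : Set V) : Prop :=
  H.Nonempty ∧ Hᶜ.Nonempty ∧ GraphConvex G H ∧ GraphConvex G Hᶜ

/-- A set `H` separates `u` from `v`. -/
def SepBy (H : Set V) (u v : V) : Prop := (u ∈ H ∧ v ∉ H) ∨ (v ∈ H ∧ u ∉ H)

/-- Two pairs (a,b) and (x,y) are parallel: every halfspace contains a but not b
iff it contains x but not y. -/
def ParallelPairs (G : SimpleGraph V) (a b x y : V) : Prop :=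
  ∀ H : Set V, IsHalfspace G H → ((a ∈ H ∧ b ∉ H) ↔ (x ∈ H ∧ y ∉ H))


lemma isHalfspace_compl {G : SimpleGraph V} {H : Set V} (h : IsHalfspace G H) :
    IsHalfspace G Hᶜ := by
  obtain ⟨h1, h2, h3, h4⟩ := h
  refine ⟨h2, ?_, h4, ?_⟩ <;> rw [compl_compl] <;> assumption

/-- for parallel pairs (a,b) and (x,y) in a median graph, every
hyperplane separating x from a is transverse (all four quadrants nonempty) to
every hyperplane separating x from y. -/
theorem stmt_10 (G : SimpleGraph V) (hmed : IsMedianGraph G)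
    (a b x y : V) (hpar : ParallelPairs G a b x y) :
    ∀ H K : Set V, IsHalfspace G H → IsHalfspace G K →
      SepBy H x a → SepBy K x y →
      (H ∩ K).Nonempty ∧ (H ∩ Kᶜ).Nonempty ∧ (Hᶜ ∩ K).Nonempty ∧ (Hᶜ ∩ Kᶜ).Nonempty := by
  intro H K hH hK sepH sepK
  have iH := hpar H hH
  have iHc := hpar Hᶜ (isHalfspace_compl hH)
  have iK := hpar K hK
  have iKc := hpar Kᶜ (isHalfspace_compl hK)
  simp only [Set.mem_compl_iff, not_not] at iHc iKc
  rcases sepH with ⟨hx, ha⟩ | ⟨ha, hx⟩ <;> rcases sepK with ⟨kx, ky⟩ | ⟨ky, kx⟩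
  · have hy : y ∈ H := by by_contra h; exact ha (iH.mpr ⟨hx, h⟩).1
    have hb : b ∉ H := fun h => (iHc.mp ⟨ha, h⟩).1 hx
    have ab := iK.mpr ⟨kx, ky⟩
    exact ⟨⟨x, hx, kx⟩, ⟨y, hy, ky⟩, ⟨a, ha, ab.1⟩, ⟨b, hb, ab.2⟩⟩
  · have hy : y ∈ H := by by_contra h; exact ha (iH.mpr ⟨hx, h⟩).1
    have hb : b ∉ H := fun h => (iHc.mp ⟨ha, h⟩).1 hx
    have ab := iKc.mpr ⟨kx, ky⟩
    exact ⟨⟨y, hy, ky⟩, ⟨x, hx, kx⟩, ⟨b, hb, ab.2⟩, ⟨a, ha, ab.1⟩⟩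
  · have hy : y ∉ H := fun h => (iHc.mpr ⟨hx, h⟩).1 ha
    have hb : b ∈ H := by by_contra h; exact hx (iH.mp ⟨ha, h⟩).1
    have ab := iK.mpr ⟨kx, ky⟩
    exact ⟨⟨a, ha, ab.1⟩, ⟨b, hb, ab.2⟩, ⟨x, hx, kx⟩, ⟨y, hy, ky⟩⟩
  · have hy : y ∉ H := fun h => (iHc.mpr ⟨hx, h⟩).1 ha
    have hb : b ∈ H := by by_contra h; exact hx (iH.mp ⟨ha, h⟩).1
    have ab := iKc.mpr ⟨kx, ky⟩
    exact ⟨⟨b, hb, ab.2⟩, ⟨a, ha, ab.1⟩, ⟨y, hy, ky⟩, ⟨x, hx, kx⟩⟩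
end

section
/- Let X be a median graph and 𝒫 a collection of convex subgraphs such that for any two parallel pairs of vertices (x,y) and (a,b), if x and y both lie in a common member of 𝒫 then a and b both lie in a common member of 𝒫. Then 𝒫 is syllabic: any two vertices of X are connected by a geodesic in ConeOff(X,𝒫) whose piecewise-geodesic extension in X is a geodesic of X. -/
open SimpleGraph

variable {V : Type*}

/-- The cone-off of a graph over a collection of vertex-sets: add an edge between
any two distinct vertices lying in a common member of the collection. -/
def coneOff (X : SimpleGraph V) (P : Set (Set V)) : SimpleGraph V :=
  SimpleGraph.fromRel (fun x y => X.Adj x y ∨ ∃ S ∈ P, x ∈ S ∧ y ∈ S)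

private lemma coneOff_adj' {G : SimpleGraph V} {P : Set (Set V)} {a b : V} :
    (coneOff G P).Adj a b ↔ a ≠ b ∧ (G.Adj a b ∨ ∃ S ∈ P, a ∈ S ∧ b ∈ S) := by
  unfold coneOff
  rw [SimpleGraph.fromRel_adj]
  constructor
  · rintro ⟨hne, h | h⟩
    · exact ⟨hne, h⟩
    · rcases h with h | ⟨S, hS, h1, h2⟩
      exacts [⟨hne, Or.inl h.symm⟩, ⟨hne, Or.inr ⟨S, hS, h2, h1⟩⟩]
  · rintro ⟨hne, h⟩
    exact ⟨hne, Or.inl h⟩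

private lemma coneOff_connected {G : SimpleGraph V} {P : Set (Set V)}
    (hconn : G.Connected) : (coneOff G P).Connected := by
  refine Connected.mono ?_ hconn
  intro a b hab
  exact coneOff_adj'.mpr ⟨hab.ne, Or.inl hab⟩

/-- The key "shadowing" step: moving one cone-off edge along, the median toward `y`
moves by at most one cone-off edge. -/
private lemma shadow_step {G : SimpleGraph V} {P : Set (Set V)}
    (hmed : IsMedianGraph G) (hconv : ∀ S ∈ P, GraphConvex G S)
    (hstable : ∀ x y a b : V, ParallelPairs G x y a b →
      (∃ S ∈ P, x ∈ S ∧ y ∈ S) → ∃ S ∈ P, a ∈ S ∧ b ∈ S)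
    {r r' y m : V} (hadj : (coneOff G P).Adj r r')
    (hm : G.dist r m + G.dist m y = G.dist r y) :
    ∃ m', (G.dist r' m' + G.dist m' y = G.dist r' y) ∧
      (m' = m ∨ (coneOff G P).Adj m m') := by
  obtain ⟨hconn, hmedu⟩ := hmed
  obtain ⟨m', ⟨c1, c2, c3⟩, -⟩ := hmedu r' m y
  refine ⟨m', c2, ?_⟩
  by_cases hmm : m' = m
  · exact Or.inl hmm
  refine Or.inr ?_
  have hnem : m ≠ m' := fun h => hmm h.symm
  have comm_mm' : G.dist m m' = G.dist m' m := dist_comm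
  -- fact: m lies between r and m'
  have f3 : G.dist r m + G.dist m m' = G.dist r m' := by
    have t1 : G.dist r m' ≤ G.dist r m + G.dist m m' := hconn.dist_triangle
    have t2 : G.dist r y ≤ G.dist r m' + G.dist m' y := hconn.dist_triangle
    omega
  obtain ⟨hne, hcase⟩ := coneOff_adj'.mp hadj
  rcases hcase with hadj' | ⟨S, hS, hrS, hr'S⟩
  · -- r, r' adjacent in G : then m, m' are at distance ≤ 1
    have hrr1 : G.dist r r' = 1 := dist_eq_one_iff_adj.mpr hadj'
    have comm_rr' : G.dist r r' = G.dist r' r := dist_comm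
    have t1 : G.dist r m' ≤ G.dist r r' + G.dist r' m' := hconn.dist_triangle
    have t2 : G.dist r' m ≤ G.dist r' r + G.dist r m := hconn.dist_triangle
    have hw : G.dist m m' ≤ 1 := by omega
    have hw1 : G.dist m m' = 1 := by
      have := hconn.pos_dist_of_ne hnem
      omega
    exact coneOff_adj'.mpr ⟨hnem, Or.inl (dist_eq_one_iff_adj.mp hw1)⟩
  · -- r, r' in a common piece S
    obtain ⟨g, ⟨g1, g2, g3⟩, -⟩ := hmedu r r' m
    obtain ⟨g', ⟨G1, G2, G3⟩, hg'uniq⟩ := hmedu r r' m'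
    -- g lies between r and m'
    have fgm' : G.dist r g + G.dist g m' = G.dist r m' := by
      have t1 : G.dist r m' ≤ G.dist r g + G.dist g m' := hconn.dist_triangle
      have t2 : G.dist g m' ≤ G.dist g m + G.dist m m' := hconn.dist_triangle
      omega
    obtain ⟨u, ⟨u1, u2, u3⟩, -⟩ := hmedu g r' m'
    have hu : u = g' := by
      apply hg'uniq
      refine ⟨?_, ?_, u3⟩
      · have t1 : G.dist r r' ≤ G.dist r u + G.dist u r' := hconn.dist_triangle
        have t2 : G.dist r u ≤ G.dist r g + G.dist g u := hconn.dist_triangle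
        omega
      · have t1 : G.dist r m' ≤ G.dist r u + G.dist u m' := hconn.dist_triangle
        have t2 : G.dist r u ≤ G.dist r g + G.dist g u := hconn.dist_triangle
        omega
    rw [hu] at u1 u2 u3
    -- u1 : d g g' + d g' r' = d g r'   (order r, g, g', r')
    -- u2 : d g g' + d g' m' = d g m'   (rectangle side D)
    -- A : m between g and m'
    have hA : G.dist g m + G.dist m m' = G.dist g m' := by omega
    -- B : m' between g' and m
    have hB : G.dist g' m' + G.dist m' m = G.dist g' m := by
      have t1 : G.dist g' m ≤ G.dist g' m' + G.dist m' m := hconn.dist_triangle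
      have t2 : G.dist r' m ≤ G.dist r' g' + G.dist g' m := hconn.dist_triangle
      omega
    -- C : g between m and g'
    have hC : G.dist m g + G.dist g g' = G.dist m g' := by
      have comm_rg : G.dist r' g = G.dist g r' := dist_comm
      have comm_rg' : G.dist r' g' = G.dist g' r' := dist_comm
      have comm_gm : G.dist g m = G.dist m g := dist_comm
      have comm_g'm : G.dist g' m = G.dist m g' := dist_comm
      have t1 : G.dist m g' ≤ G.dist m g + G.dist g g' := hconn.dist_triangle
      have t2 : G.dist r' m ≤ G.dist r' g' + G.dist g' m := hconn.dist_triangle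
      omega
    have hpar : ParallelPairs G g g' m m' := by
      rintro H ⟨-, -, hHc, hHcc⟩
      constructor
      · rintro ⟨hgH, hg'H⟩
        constructor
        · by_contra hmH
          exact hHcc m hmH g' hg'H g hC hgH
        · intro hm'H
          exact hHc g hgH m' hm'H g' u2 |> hg'H
      · rintro ⟨hmH, hm'H⟩
        constructor
        · by_contra hgH
          exact hHcc g hgH m' hm'H m hA hmH
        · intro hg'H
          exact hHc g' hg'H m hmH m' hB |> hm'H
    have hgS : g ∈ S := hconv S hS r hrS r' hr'S g g1
    have hg'S : g' ∈ S := hconv S hS r hrS r' hr'S g' G1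
    obtain ⟨T, hT, hmT, hm'T⟩ := hstable g g' m m' hpar ⟨S, hS, hgS, hg'S⟩
    exact coneOff_adj'.mpr ⟨hnem, Or.inr ⟨T, hT, hmT, hm'T⟩⟩

/-- Shadowing a whole cone-off walk from `r` to `y` by a cone-off walk from a point
`m` between `r` and `y`, of no greater length. -/
private lemma shadow_walk {G : SimpleGraph V} {P : Set (Set V)}
    (hmed : IsMedianGraph G) (hconv : ∀ S ∈ P, GraphConvex G S)
    (hstable : ∀ x y a b : V, ParallelPairs G x y a b →
      (∃ S ∈ P, x ∈ S ∧ y ∈ S) → ∃ S ∈ P, a ∈ S ∧ b ∈ S) :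
    ∀ {r y : V} (w : (coneOff G P).Walk r y) (m : V),
      G.dist r m + G.dist m y = G.dist r y →
      ∃ w' : (coneOff G P).Walk m y, w'.length ≤ w.length := by
  intro r y w
  induction w with
  | nil =>
    intro m hm
    rename_i r
    have : G.dist r m = 0 := by
      have := dist_self (G := G) (v := r)
      omega
    have hmr : r = m := (hmed.1.dist_eq_zero_iff).mp this
    subst hmr
    exact ⟨.nil, le_rfl⟩
  | cons h q ih =>
    intro m hm
    obtain ⟨m', hm', hcase⟩ := shadow_step hmed hconv hstable h hm
    obtain ⟨w'', hw''⟩ := ih m' hm'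
    rcases hcase with heq | hadj
    · subst heq
      exact ⟨w'', by simpa using Nat.le_succ_of_le hw''⟩
    · exact ⟨Walk.cons hadj w'', by simpa using hw''⟩

private lemma coneDist_mono {G : SimpleGraph V} {P : Set (Set V)}
    (hmed : IsMedianGraph G) (hconv : ∀ S ∈ P, GraphConvex G S)
    (hstable : ∀ x y a b : V, ParallelPairs G x y a b →
      (∃ S ∈ P, x ∈ S ∧ y ∈ S) → ∃ S ∈ P, a ∈ S ∧ b ∈ S)
    {r y m : V} (hm : G.dist r m + G.dist m y = G.dist r y) :
    (coneOff G P).dist m y ≤ (coneOff G P).dist r y := by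
  obtain ⟨w, hw⟩ := (coneOff_connected hmed.1 (P := P)).exists_walk_length_eq_dist r y
  obtain ⟨w', hw'⟩ := shadow_walk hmed hconv hstable w m hm
  calc (coneOff G P).dist m y ≤ w'.length := dist_le w'
    _ ≤ w.length := hw'
    _ = (coneOff G P).dist r y := hw

/-- One step of the construction: from `x` at cone-distance `k+1` from `y`, find a
cone-neighbour `z` of `x` lying between `x` and `y` in `G`, at cone-distance `k`. -/
private lemma crux {G : SimpleGraph V} {P : Set (Set V)}
    (hmed : IsMedianGraph G) (hconv : ∀ S ∈ P, GraphConvex G S)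
    (hstable : ∀ x y a b : V, ParallelPairs G x y a b →
      (∃ S ∈ P, x ∈ S ∧ y ∈ S) → ∃ S ∈ P, a ∈ S ∧ b ∈ S)
    {x y : V} {k : ℕ} (hxy : (coneOff G P).dist x y = k + 1) :
    ∃ z, (coneOff G P).Adj x z ∧ G.dist x z + G.dist z y = G.dist x y ∧
      (coneOff G P).dist z y = k := by
  have hconn := hmed.1
  have hmedu := hmed.2
  have cconn : (coneOff G P).Connected := coneOff_connected hconn
  obtain ⟨w, hw⟩ := cconn.exists_walk_length_eq_dist x y
  rw [hxy] at hw
  cases w with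
  | nil => simp at hw
  | cons h q =>
    rename_i q₁
    simp only [Walk.length_cons, Nat.succ_inj] at hw
    have hq₁ : (coneOff G P).dist q₁ y ≤ k := hw ▸ dist_le q
    obtain ⟨z, ⟨z1, z2, z3⟩, -⟩ := hmedu x q₁ y
    have hzy : (coneOff G P).dist z y ≤ k :=
      le_trans (coneDist_mono hmed hconv hstable z3) hq₁
    have hzx : z ≠ x := by
      intro h
      subst h
      have hbtw : G.dist q₁ z + G.dist z y = G.dist q₁ y := z3
      have := coneDist_mono hmed hconv hstable (r := q₁) (m := z) (y := y) z3
      omega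
    have hxz : (coneOff G P).Adj x z := by
      obtain ⟨hne, hcase⟩ := coneOff_adj'.mp h
      rcases hcase with hadj' | ⟨S, hS, hxS, hq₁S⟩
      · have h1 : G.dist x q₁ = 1 := dist_eq_one_iff_adj.mpr hadj'
        have h0 : 0 < G.dist x z := hconn.pos_dist_of_ne (fun hh => hzx hh.symm)
        have hz1 : G.dist x z = 1 := by omega
        exact coneOff_adj'.mpr ⟨fun hh => hzx hh.symm, Or.inl (dist_eq_one_iff_adj.mp hz1)⟩
      · have hzS : z ∈ S := hconv S hS x hxS q₁ hq₁S z z1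
        exact coneOff_adj'.mpr ⟨fun hh => hzx hh.symm, Or.inr ⟨S, hS, hxS, hzS⟩⟩
    refine ⟨z, hxz, z2, ?_⟩
    have h1 : (coneOff G P).dist x z ≤ 1 := by
      have := dist_eq_one_iff_adj.mpr hxz
      omega
    have htri : (coneOff G P).dist x y ≤ (coneOff G P).dist x z + (coneOff G P).dist z y :=
      cconn.dist_triangle
    omega

/-- in a median graph, a collection of convex subgraphs stable under
parallelism of pairs is syllabic: any two vertices are joined by a geodesic of the
cone-off whose piecewise-geodesic extension is a geodesic of X. -/
theorem stmt_12 (G : SimpleGraph V) (hmed : IsMedianGraph G)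
    (P : Set (Set V)) (hconv : ∀ S ∈ P, GraphConvex G S)
    (hstable : ∀ x y a b : V, ParallelPairs G x y a b →
      (∃ S ∈ P, x ∈ S ∧ y ∈ S) → ∃ S ∈ P, a ∈ S ∧ b ∈ S) :
    ∀ x y : V, ∃ (n : ℕ) (p : Fin (n + 1) → V),
      p 0 = x ∧ p (Fin.last n) = y ∧
      (∀ i : Fin n, (coneOff G P).Adj (p i.castSucc) (p i.succ)) ∧
      n = (coneOff G P).dist x y ∧
      (∑ i : Fin n, G.dist (p i.castSucc) (p i.succ)) = G.dist x y := by
  suffices hk : ∀ k : ℕ, ∀ x y : V, (coneOff G P).dist x y = k →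
      ∃ (n : ℕ) (p : Fin (n + 1) → V),
      p 0 = x ∧ p (Fin.last n) = y ∧
      (∀ i : Fin n, (coneOff G P).Adj (p i.castSucc) (p i.succ)) ∧
      n = (coneOff G P).dist x y ∧
      (∑ i : Fin n, G.dist (p i.castSucc) (p i.succ)) = G.dist x y by
    exact fun x y => hk _ x y rfl
  intro k
  induction k with
  | zero =>
    intro x y hk
    have hxy : x = y := ((coneOff_connected hmed.1 (P := P)).dist_eq_zero_iff).mp hk
    subst hxy
    refine ⟨0, fun _ => x, rfl, rfl, fun i => i.elim0, hk.symm, by simp [dist_self]⟩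
  | succ k ih =>
    intro x y hk
    obtain ⟨z, hadj, hbtw, hz⟩ := crux hmed hconv hstable hk
    obtain ⟨n', p', hp0, hplast, hpadj, hpn, hpsum⟩ := ih z y hz
    have hn'k : n' = k := hpn.trans hz
    subst hn'k
    refine ⟨n' + 1, Fin.cons x p', by simp, ?_, ?_, hk.symm, ?_⟩
    · rw [← Fin.succ_last, Fin.cons_succ]
      exact hplast
    · intro i
      refine Fin.cases ?_ ?_ i
      · simpa [Fin.succ_castSucc] using (hp0 ▸ hadj)
      · intro j
        have h1 : (Fin.cons x p' : Fin (n' + 2) → V) (j.succ).castSucc = p' j.castSucc := by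
          rw [← Fin.succ_castSucc, Fin.cons_succ]
        have h2 : (Fin.cons x p' : Fin (n' + 2) → V) (j.succ).succ = p' j.succ := by
          rw [Fin.cons_succ]
        rw [h1, h2]
        exact hpadj j
    · rw [Fin.sum_univ_succ]
      have h0 : G.dist ((Fin.cons x p' : Fin (n' + 2) → V) (0 : Fin (n' + 1)).castSucc)
          ((Fin.cons x p' : Fin (n' + 2) → V) (0 : Fin (n' + 1)).succ) = G.dist x z := by
        have e2 : (Fin.cons x p' : Fin (n' + 2) → V) (0 : Fin (n' + 1)).succ = z := by
          rw [Fin.cons_succ, hp0]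
        rw [Fin.castSucc_zero, Fin.cons_zero, e2]
      rw [h0]
      have hrest : ∀ j : Fin n',
          G.dist ((Fin.cons x p' : Fin (n' + 2) → V) (j.succ).castSucc)
            ((Fin.cons x p' : Fin (n' + 2) → V) (j.succ).succ)
          = G.dist (p' j.castSucc) (p' j.succ) := by
        intro j
        rw [← Fin.succ_castSucc, Fin.cons_succ, Fin.cons_succ]
      calc G.dist x z + ∑ j : Fin n',
            G.dist ((Fin.cons x p' : Fin (n' + 2) → V) (j.succ).castSucc)
              ((Fin.cons x p' : Fin (n' + 2) → V) (j.succ).succ)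
          = G.dist x z + ∑ j : Fin n', G.dist (p' j.castSucc) (p' j.succ) := by
            simp only [hrest]
        _ = G.dist x z + G.dist z y := by rw [hpsum]
        _ = G.dist x y := hbtw
end

section
/- Let X be a quasi-median graph, Y ⊂ X a gated subgraph, J a hyperplane crossing Y (i.e. containing an edge of Y), and C ⊂ J a clique of X contained in J. If C contains a vertex of Y, then C ⊆ Y. -/
open SimpleGraph

universe u

variable {V : Type u}

/-- Two vertices of a product of complete graphs are adjacent when they differ in
exactly one coordinate. -/
def HammingAdj {ι : Type u} {K : ι → Type u} (x y : ∀ i, K i) : Prop :=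
  ∃ i, x i ≠ y i ∧ ∀ j, j ≠ i → x j = y j

/-- A quasi-median graph: a connected graph that is a retract of a Hamming graph
(a product of complete graphs); the retraction is a weak graph homomorphism. -/
def IsQuasiMedianGraph (G : SimpleGraph V) : Prop :=
  G.Connected ∧ ∃ (ι : Type u) (K : ι → Type u) (f : V → ∀ i, K i) (g : (∀ i, K i) → V),
    (∀ v, g (f v) = v) ∧
    (∀ u v, G.Adj u v → HammingAdj (f u) (f v)) ∧
    (∀ x y, HammingAdj x y → g x = g y ∨ G.Adj (g x) (g y))

/-- Generating relation for hyperplanes: two edges belong to a common triangle, or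
are opposite sides of an induced 4-cycle. -/
def QMEdgeRel (G : SimpleGraph V) (e f : Sym2 V) : Prop :=
  e ∈ G.edgeSet ∧ f ∈ G.edgeSet ∧
  ((∃ a b c : V, e = s(a, b) ∧ f = s(a, c) ∧ G.Adj a b ∧ G.Adj a c ∧ G.Adj b c) ∨
   (∃ a b c d : V, e = s(a, b) ∧ f = s(d, c) ∧
     G.Adj a b ∧ G.Adj b c ∧ G.Adj c d ∧ G.Adj d a ∧
     ¬ G.Adj a c ∧ ¬ G.Adj b d ∧ a ≠ c ∧ b ≠ d))

/-- A hyperplane: the equivalence class of an edge under the relation generated by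
`QMEdgeRel`. -/
def IsHyperplane (G : SimpleGraph V) (J : Set (Sym2 V)) : Prop :=
  ∃ e ∈ G.edgeSet, J = {f | Relation.EqvGen (QMEdgeRel G) e f}

/-- A gated subgraph: every vertex admits a gate. -/
def IsGated (G : SimpleGraph V) (Y : Set V) : Prop :=
  Y.Nonempty ∧ ∀ x : V, ∃ y ∈ Y, ∀ z ∈ Y, G.dist x z = G.dist x y + G.dist y z

/-!
Realise `G` as a retract of a Hamming graph `∀ i, K i`. Two edges of a triangle, or opposite
edges of an induced square, change the same coordinate, so all edges of the hyperplane `J` change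
one coordinate `i`. Suppose `a ∈ C ∩ Y` and `c ∈ C \ Y`. Then `a` is the gate of `c` in `Y`, so
`d(c, z) = d(a, z) + 1` for `z ∈ Y`, and the edge `ac` changes `i`. The retraction is
1-Lipschitz for the Hamming distance, so a vertex `z` with `z_i ≠ a_i` satisfies
`d(c, z) ≤ d(a, z)`; hence all of `Y` has `i`-th coordinate `a_i` and no edge of `Y` lies in `J`.
-/

universe w

lemma HammingAdj.apply_eq_of_ne {ι : Type w} {K : ι → Type w} {x y : ∀ i, K i}
    (h : HammingAdj x y) {i j : ι} (hi : x i ≠ y i) (hj : j ≠ i) : x j = y j := by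
  obtain ⟨m, -, hoff⟩ := h
  obtain rfl : i = m := by_contra fun him => hi (hoff i him)
  exact hoff j hj

structure HammingRetract (G : SimpleGraph V) (ι : Type w) (K : ι → Type w) where
  embed : V → ∀ i, K i
  retract : (∀ i, K i) → V
  retract_embed : ∀ v, retract (embed v) = v
  hammingAdj_embed : ∀ u v, G.Adj u v → HammingAdj (embed u) (embed v)
  retract_eq_or_adj : ∀ x y, HammingAdj x y → retract x = retract y ∨ G.Adj (retract x) (retract y)

lemma IsQuasiMedianGraph.exists_hammingRetract {G : SimpleGraph V} (h : IsQuasiMedianGraph G) :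
    ∃ (ι : Type u) (K : ι → Type u), Nonempty (HammingRetract G ι K) := by
  obtain ⟨-, ι, K, f, g, hgf, hf, hg⟩ := h
  exact ⟨ι, K, ⟨⟨f, g, hgf, hf, hg⟩⟩⟩

lemma IsGated.dist_eq_dist_add_one_of_adj {G : SimpleGraph V} (hconn : G.Connected) {Y : Set V}
    (hY : IsGated G Y) {a c : V} (ha : a ∈ Y) (hc : c ∉ Y) (hac : G.Adj a c) :
    ∀ z ∈ Y, G.dist c z = G.dist a z + 1 := by
  obtain ⟨y, hy, hgate⟩ := hY.2 c
  have hca : G.dist c y + G.dist y a = 1 := by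
    rw [← hgate a ha, dist_eq_one_iff_adj]; exact hac.symm
  have hcy : G.dist c y ≠ 0 := fun h0 => hc (hconn.dist_eq_zero_iff.mp h0 ▸ hy)
  obtain rfl : y = a := hconn.dist_eq_zero_iff.mp (by omega)
  intro z hz
  rw [hgate z hz]
  omega

namespace HammingRetract

variable {G : SimpleGraph V} {ι : Type w} {K : ι → Type w} (R : HammingRetract G ι K)

lemma retract_eq_or_adj_of_forall_ne {x y : ∀ i, K i} (i : ι) (h : ∀ j, j ≠ i → x j = y j) :
    R.retract x = R.retract y ∨ G.Adj (R.retract x) (R.retract y) := by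
  by_cases hxy : x i = y i
  · left
    congr 1
    funext j
    by_cases hj : j = i
    · exact hj ▸ hxy
    · exact h j hj
  · exact R.retract_eq_or_adj x y ⟨i, hxy, h⟩

lemma eq_or_adj_of_forall_ne {u v : V} (i : ι) (h : ∀ j, j ≠ i → R.embed u j = R.embed v j) :
    u = v ∨ G.Adj u v := by
  simpa only [R.retract_embed] using R.retract_eq_or_adj_of_forall_ne i h

def ChangesCoord (i : ι) (e : Sym2 V) : Prop :=
  Sym2.lift ⟨fun u v => R.embed u i ≠ R.embed v i, fun _ _ => propext ne_comm⟩ e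

lemma ne_of_triangle {a b c : V} (hab : G.Adj a b) (hac : G.Adj a c) (hbc : G.Adj b c) {i : ι}
    (h : R.embed a i ≠ R.embed b i) : R.embed a i ≠ R.embed c i := by
  intro hi
  obtain ⟨j, hj, -⟩ := R.hammingAdj_embed a c hac
  have hji : j ≠ i := fun hji => hj (hji ▸ hi)
  have hbcj : R.embed b j ≠ R.embed c j := by
    rwa [← (R.hammingAdj_embed a b hab).apply_eq_of_ne h hji]
  have hbci : R.embed b i ≠ R.embed c i := hi ▸ Ne.symm h
  exact hbci ((R.hammingAdj_embed b c hbc).apply_eq_of_ne hbcj hji.symm)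

lemma ne_of_square {a b c d : V} (hab : G.Adj a b) (hbc : G.Adj b c)
    (hda : G.Adj d a) (hac : ¬ G.Adj a c) (hbd : ¬ G.Adj b d) (hac' : a ≠ c) (hbd' : b ≠ d)
    {i : ι} (h : R.embed a i ≠ R.embed b i) : R.embed d i ≠ R.embed c i := by
  have hoffab := fun j => (R.hammingAdj_embed a b hab).apply_eq_of_ne (j := j) h
  obtain ⟨j, -, hoffbc⟩ := R.hammingAdj_embed b c hbc
  obtain ⟨l, -, hoffda⟩ := R.hammingAdj_embed d a hda
  -- the diagonals are non-edges, so opposite vertices differ in two coordinates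
  have hji : j ≠ i := by
    rintro rfl
    have := R.eq_or_adj_of_forall_ne j fun m hm => (hoffab m hm).trans (hoffbc m hm)
    tauto
  have hli : l ≠ i := by
    rintro rfl
    have := R.eq_or_adj_of_forall_ne l fun m hm => (hoffab m hm).symm.trans (hoffda m hm).symm
    tauto
  rwa [hoffda i hli.symm, ← hoffbc i hji.symm]

lemma changesCoord_iff_of_qmEdgeRel {e e' : Sym2 V} (h : QMEdgeRel G e e') (i : ι) :
    R.ChangesCoord i e ↔ R.ChangesCoord i e' := by
  obtain ⟨-, -, ⟨a, b, c, rfl, rfl, hab, hac, hbc⟩ |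
    ⟨a, b, c, d, rfl, rfl, hab, hbc, hcd, hda, hac, hbd, hac', hbd'⟩⟩ := h
  · exact ⟨R.ne_of_triangle hab hac hbc, R.ne_of_triangle hac hab hbc.symm⟩
  · exact ⟨R.ne_of_square hab hbc hda hac hbd hac' hbd',
      R.ne_of_square hcd.symm hbc.symm hda.symm (fun h => hbd h.symm) (fun h => hac h.symm)
        hbd'.symm hac'.symm⟩

lemma changesCoord_iff_of_eqvGen {e e' : Sym2 V} (h : Relation.EqvGen (QMEdgeRel G) e e')
    (i : ι) : R.ChangesCoord i e ↔ R.ChangesCoord i e' := by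
  induction h with
  | rel _ _ h => exact R.changesCoord_iff_of_qmEdgeRel h i
  | refl => exact Iff.rfl
  | symm _ _ _ ih => exact ih.symm
  | trans _ _ _ _ _ ih₁ ih₂ => exact ih₁.trans ih₂

lemma changesCoord_iff_of_mem_hyperplane {J : Set (Sym2 V)} (hJ : IsHyperplane G J)
    {e e' : Sym2 V} (he : e ∈ J) (he' : e' ∈ J) (i : ι) :
    R.ChangesCoord i e ↔ R.ChangesCoord i e' := by
  obtain ⟨e₀, -, rfl⟩ := hJ
  exact R.changesCoord_iff_of_eqvGen (.trans _ _ _ (.symm _ _ he) he') i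

lemma exists_finset_card_le_length_of_walk {u v : V} (w : G.Walk u v) :
    ∃ s : Finset ι, s.card ≤ w.length ∧ ∀ j ∉ s, R.embed u j = R.embed v j := by
  classical
  induction w with
  | nil => exact ⟨∅, by simp, fun _ _ => rfl⟩
  | cons h _ ih =>
    obtain ⟨s, hcard, hs⟩ := ih
    obtain ⟨m, -, hoff⟩ := R.hammingAdj_embed _ _ h
    refine ⟨insert m s, ?_, fun j hj => ?_⟩
    · grw [Walk.length_cons, Finset.card_insert_le, hcard]
    · rw [Finset.mem_insert, not_or] at hj
      rw [hoff j hj.1, hs j hj.2]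

lemma dist_retract_le_card (hconn : G.Connected) (s : Finset ι) {x y : ∀ i, K i}
    (hxy : ∀ j ∉ s, x j = y j) : G.dist (R.retract x) (R.retract y) ≤ s.card := by
  classical
  induction s using Finset.induction_on generalizing x with
  | empty =>
    obtain rfl : x = y := funext fun j => hxy j (Finset.notMem_empty j)
    simp
  | insert i s hi ih =>
    set x' := Function.update x i (y i)
    have hxx' : G.dist (R.retract x) (R.retract x') ≤ 1 := by
      rcases R.retract_eq_or_adj_of_forall_ne i
        (fun j hj => (Function.update_of_ne hj (y i) x).symm) with heq | hadj
      · simp [x', heq]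
      · exact (dist_eq_one_iff_adj.mpr hadj).le
    have hx'y : G.dist (R.retract x') (R.retract y) ≤ s.card := by
      refine ih fun j hj => ?_
      by_cases hji : j = i
      · subst hji; simp [x']
      · exact (Function.update_of_ne hji _ _).trans (hxy j (by simp [hji, hj]))
    calc G.dist (R.retract x) (R.retract y)
        ≤ G.dist (R.retract x) (R.retract x') + G.dist (R.retract x') (R.retract y) :=
          hconn.dist_triangle
      _ ≤ (insert i s).card := by rw [Finset.card_insert_of_notMem hi]; omega

lemma dist_le_dist_of_forall_ne (hconn : G.Connected) {a c z : V} {i : ι}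
    (hca : ∀ j, j ≠ i → R.embed c j = R.embed a j) (hz : R.embed a i ≠ R.embed z i) :
    G.dist c z ≤ G.dist a z := by
  obtain ⟨w, hw⟩ := (hconn a z).exists_walk_length_eq_dist
  obtain ⟨s, hcard, hs⟩ := R.exists_finset_card_le_length_of_walk w
  have hi : i ∈ s := by_contra fun hi => hz (hs i hi)
  have hcz : ∀ j ∉ s, R.embed c j = R.embed z j := fun j hj =>
    (hca j (ne_of_mem_of_not_mem hi hj).symm).trans (hs j hj)
  simpa only [R.retract_embed, hw] using (R.dist_retract_le_card hconn s hcz).trans hcard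

lemma embed_apply_eq_of_mem_of_isGated (hconn : G.Connected) {Y : Set V} (hY : IsGated G Y)
    {a c : V} (ha : a ∈ Y) (hc : c ∉ Y) (hac : G.Adj a c) {i : ι}
    (hi : R.embed a i ≠ R.embed c i) {z : V} (hz : z ∈ Y) : R.embed z i = R.embed a i := by
  by_contra hza
  have hgate := hY.dist_eq_dist_add_one_of_adj hconn ha hc hac z hz
  have hle := R.dist_le_dist_of_forall_ne hconn
    (fun j hj => ((R.hammingAdj_embed a c hac).apply_eq_of_ne hi hj).symm) (Ne.symm hza)
  omega

end HammingRetract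

theorem stmt_13_general (G : SimpleGraph V) (hqm : IsQuasiMedianGraph G)
    (Y : Set V) (hY : IsGated G Y)
    (J : Set (Sym2 V)) (hJ : IsHyperplane G J)
    (hcross : ∃ a b : V, a ∈ Y ∧ b ∈ Y ∧ s(a, b) ∈ J)
    (C : Set V)
    (hcomplete : ∀ a ∈ C, ∀ b ∈ C, a ≠ b → G.Adj a b)
    (hCJ : ∀ a ∈ C, ∀ b ∈ C, a ≠ b → s(a, b) ∈ J)
    (hmeet : ∃ a, a ∈ C ∧ a ∈ Y) :
    C ⊆ Y := by
  obtain ⟨ι, K, ⟨R⟩⟩ := hqm.exists_hammingRetract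
  obtain ⟨a, haC, haY⟩ := hmeet
  obtain ⟨p, q, hp, hq, hpqJ⟩ := hcross
  intro c hc
  by_contra hcY
  have hac : a ≠ c := fun h => hcY (h ▸ haY)
  have hadj := hcomplete a haC c hc hac
  obtain ⟨i, hi, -⟩ := R.hammingAdj_embed a c hadj
  have hpq : R.ChangesCoord i s(p, q) :=
    (R.changesCoord_iff_of_mem_hyperplane hJ (hCJ a haC c hc hac) hpqJ i).mp hi
  have hYi {z} (hz : z ∈ Y) : R.embed z i = R.embed a i :=
    R.embed_apply_eq_of_mem_of_isGated hqm.1 hY haY hcY hadj hi hz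
  exact hpq ((hYi hp).trans (hYi hq).symm)

/-- in a quasi-median graph, if a hyperplane J crosses a gated
subgraph Y and C is a clique of X all of whose edges lie in J, then C ⊆ Y as soon
as C meets Y. -/
theorem stmt_13 (G : SimpleGraph V) (hqm : IsQuasiMedianGraph G)
    (Y : Set V) (hY : IsGated G Y)
    (J : Set (Sym2 V)) (hJ : IsHyperplane G J)
    (hcross : ∃ a b : V, a ∈ Y ∧ b ∈ Y ∧ s(a, b) ∈ J)
    (C : Set V)
    (hcomplete : ∀ a ∈ C, ∀ b ∈ C, a ≠ b → G.Adj a b)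
    (hmax : ∀ c : V, c ∉ C → ∃ a ∈ C, ¬ G.Adj a c)
    (hCJ : ∀ a ∈ C, ∀ b ∈ C, a ≠ b → s(a, b) ∈ J)
    (hCnontriv : ∃ a ∈ C, ∃ b ∈ C, a ≠ b)
    (hmeet : ∃ a, a ∈ C ∧ a ∈ Y) :
    C ⊆ Y :=
  stmt_13_general G hqm Y hY J hJ hcross C hcomplete hCJ hmeet
end

section
/- Let X be a quasi-median graph and γ a path in X that is not a geodesic. Then γ contains two edges e and f belonging to a common hyperplane J such that the subpath γ₀ of γ between them is a geodesic contained in a single fibre of J; consequently e, γ₀, f span either a ladder (γ₀ together with a parallel copy joined by squares) or a tower configuration inside N(J) ≅ F × C. -/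
open SimpleGraph

universe u

variable {V : Type u}

/-- The carrier of a hyperplane: vertices incident to an edge of the hyperplane. -/
def hypCarrier (G : SimpleGraph V) (J : Set (Sym2 V)) : Set V :=
  {v | ∃ w : V, G.Adj v w ∧ s(v, w) ∈ J}

/-!
The retraction embeds `G` isometrically into the Hamming graph, so every edge changes exactly
one coordinate and all edges of a hyperplane (generated by triangles and induced squares) change
the same coordinate. A walk whose edges change pairwise distinct coordinates is a geodesic, so a
non-geodesic walk `g` repeats a coordinate; take a repetition `c i = c j` with `j - i` minimal.
Resetting coordinate `c i` of `g b` (`i < b ≤ j`) to its value at `g i` gives a point fixed by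
the retraction, hence a vertex `rung b` of `G`: these rungs form a ladder of squares from the edge
`g (i+1) g i = g (i+1) (rung (i+1))` up to the edge `g j g (j+1)`, closed by a triangle when
`rung j ≠ g (j+1)`.
-/

open Function Set

section Hamming

variable {ι : Type u} {K : ι → Type u}

def diffSet (x y : ∀ i, K i) : Set ι := {i | x i ≠ y i}

variable {x y z : ∀ i, K i} {i k : ι} {t : K i} {s : Set ι}

@[simp] lemma mem_diffSet : k ∈ diffSet x y ↔ x k ≠ y k := Iff.rfl

lemma diffSet_comm (x y : ∀ i, K i) : diffSet x y = diffSet y x :=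
  ext fun _ => ne_comm

lemma diffSet_eq_empty_iff : diffSet x y = ∅ ↔ x = y := by
  simp [eq_empty_iff_forall_notMem, funext_iff]

lemma diffSet_subset_union (x y z : ∀ i, K i) : diffSet x z ⊆ diffSet x y ∪ diffSet y z :=
  fun k hk => by_contra fun h => by simp_all

lemma hammingAdj_iff : HammingAdj x y ↔ ∃ i, diffSet x y = {i} := by
  simp only [HammingAdj, Set.ext_iff, mem_diffSet, mem_singleton_iff]
  refine exists_congr fun i =>
    ⟨fun ⟨hi, h⟩ j => ?_, fun h => ⟨(h i).2 rfl, fun j hj => ?_⟩⟩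
  · exact ⟨fun hj => by_contra fun hji => hj (h j hji), fun hji => hji ▸ hi⟩
  · exact by_contra fun hne => hj ((h j).1 hne)

lemma diffSet_eq_insert (hxy : diffSet x y = s) (hyz : diffSet y z = {k}) (hk : k ∉ s) :
    diffSet x z = insert k s := by
  ext l
  have hyz' : y l ≠ z l ↔ l = k := by simpa using Set.ext_iff.1 hyz l
  by_cases hl : l = k
  · subst hl
    have : x l = y l := by_contra fun h => hk (hxy ▸ h)
    simpa [this] using hyz'
  · have : y l = z l := by_contra fun h => hl (hyz'.1 h)
    simp [← this, ← hxy, hl]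

variable [DecidableEq ι]

lemma eq_update_of_diffSet_subset (h : diffSet x y ⊆ {i}) : y = update x i (y i) := by
  funext l
  by_cases hl : l = i
  · subst hl; simp
  · rw [update_of_ne hl]
    exact by_contra fun hne => hl (h (Ne.symm hne))

lemma diffSet_update_self (h : t ≠ x i) : diffSet x (update x i t) = {i} := by
  ext l
  by_cases hl : l = i
  · subst hl; simp [Ne.symm h]
  · simp [hl]

lemma diffSet_update_of_eq (h : y i = t) : diffSet y (update x i t) = diffSet y x \ {i} := by
  ext l
  by_cases hl : l = i
  · subst hl; simp [h]
  · simp [hl]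

lemma diffSet_update_subset : diffSet y (update x i t) ⊆ insert i (diffSet y x) := by
  intro l hl
  by_cases h : l = i
  · exact .inl h
  · exact .inr (by simpa [update_of_ne h] using hl)

lemma diffSet_update_update : diffSet (update x i t) (update y i t) = diffSet x y \ {i} := by
  ext l
  by_cases hl : l = i
  · subst hl; simp
  · simp [hl]

/- A Hamming neighbour `z` of `p` strictly closer to `P` than `p` is must be
`update p κ' (P κ')` with `κ' ∈ diffSet p P`; being no farther from `Q` than `p` then forces
`κ' = κ`. -/
lemma eq_update_of_encard_diffSet_le {p P Q : ∀ i, K i} {κ κ' : ι}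
    (hP : P κ ≠ p κ) (hQ : Q κ ≠ p κ) (hPQ : diffSet p P ∩ diffSet p Q ⊆ {κ})
    (hPfin : (diffSet P p).Finite) (hQfin : (diffSet Q p).Finite) (hz : diffSet p z ⊆ {κ'})
    (hzP : (diffSet P z).encard ≤ (diffSet P (update p κ (P κ))).encard)
    (hzQ : (diffSet Q z).encard ≤ (diffSet Q (update p κ (P κ))).encard) :
    z = update p κ (P κ) := by
  have hlt : (diffSet P z).encard < (diffSet P p).encard := by
    refine hzP.trans_lt ?_
    rw [diffSet_update_of_eq rfl]
    exact hPfin.sdiff.encard_lt_encard (sdiff_singleton_ssubset.2 hP)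
  have hzκ' : z κ' = P κ' := by
    by_contra hne
    refine hlt.not_ge (encard_le_encard fun l hl => ?_)
    by_cases hl' : l = κ'
    · subst hl'; exact fun h => hne h.symm
    · have : p l = z l := by_contra fun h => hl' (hz h)
      simpa [← this] using hl
  have hκ' : κ' = κ := by
    by_contra hne
    have hpκ' : p κ' ≠ P κ' := fun h => by
      rw [eq_update_of_diffSet_subset hz, hzκ', ← h, update_eq_self] at hlt
      exact hlt.false
    have hQκ' : Q κ' = p κ' := by_contra fun h => hne (hPQ ⟨hpκ', Ne.symm h⟩)
    have hsub : insert κ' (diffSet Q p) ⊆ diffSet Q z := by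
      rw [insert_subset_iff]
      refine ⟨by simpa [hQκ', hzκ'] using hpκ', fun l hl => ?_⟩
      have : p l = z l := by_contra fun h => by
        rw [hz h] at hl; exact hl hQκ'
      simpa [← this] using hl
    have hyQ : diffSet Q (update p κ (P κ)) ⊆ diffSet Q p :=
      diffSet_update_subset.trans (insert_subset hQ subset_rfl)
    have := (hQfin.encard_lt_encard (ssubset_insert fun h => h hQκ')).trans_le
      ((encard_le_encard hsub).trans (hzQ.trans (encard_le_encard hyQ)))
    exact this.false
  calc z = update p κ' (z κ') := eq_update_of_diffSet_subset hz
    _ = update p κ (P κ) := by rw [hzκ', hκ']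

end Hamming

section Sequences

variable {ι : Type u} {K : ι → Type u} {α : Type*}

lemma diffSet_eq_image_Ico {x : ℕ → ∀ i, K i} {c : ℕ → ι} {a b : ℕ} (hab : a ≤ b)
    (hx : ∀ k ∈ Ico a b, diffSet (x k) (x (k + 1)) = {c k}) (hc : InjOn c (Ico a b)) :
    diffSet (x a) (x b) = c '' Ico a b := by
  induction b, hab using Nat.le_induction with
  | base => simp [diffSet_eq_empty_iff]
  | succ b hab ih =>
    have hIco : Ico a (b + 1) = insert b (Ico a b) := by ext; simp; omega
    rw [hIco] at hx hc
    rw [hIco, image_insert_eq]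
    refine diffSet_eq_insert (ih (fun k hk => hx k (.inr hk)) (hc.mono (subset_insert _ _)))
      (hx b (.inl rfl)) ?_
    rintro ⟨k, hk, hkb⟩
    exact hk.2.ne (hc (.inr hk) (.inl rfl) hkb)

lemma injOn_of_forall_lt_ne {c : ℕ → α} {s : Set ℕ}
    (h : ∀ k ∈ s, ∀ k' ∈ s, k < k' → c k ≠ c k') : InjOn c s := by
  intro k hk k' hk' heq
  by_contra hne
  rcases Nat.lt_or_gt_of_ne hne with hlt | hlt
  exacts [h k hk k' hk' hlt heq, h k' hk' k hk hlt heq.symm]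

structure IsMinimalRepeat (c : ℕ → α) (i j : ℕ) : Prop where
  lt : i < j
  eq : c i = c j
  injOn_Ico : InjOn c (Ico i j)
  injOn_Ioc : InjOn c (Ioc i j)

lemma exists_isMinimalRepeat {c : ℕ → α} {n : ℕ} (h : ¬ InjOn c (Iio n)) :
    ∃ i j, j < n ∧ IsMinimalRepeat c i j := by
  classical
  have hex : ∃ d, ∃ i, i + d < n ∧ 0 < d ∧ c i = c (i + d) := by
    by_contra! hno
    refine h (injOn_of_forall_lt_ne fun k _ k' hk' hkk' => ?_)
    have := hno (k' - k) k
    rw [Nat.add_sub_cancel' hkk'.le] at this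
    exact this hk' (by omega)
  obtain ⟨i, hin, hd, heq⟩ := Nat.find_spec hex
  have hmin : ∀ k k', k < k' → k' < n → k' - k < Nat.find hex → c k ≠ c k' :=
    fun k k' hkk' hk' hlt heq' => Nat.find_min hex hlt
      ⟨k, by omega, by omega, by rwa [Nat.add_sub_cancel' hkk'.le]⟩
  refine ⟨i, i + Nat.find hex, hin, ⟨by omega, heq, ?_, ?_⟩⟩ <;>
    refine injOn_of_forall_lt_ne fun k hk k' hk' hkk' => hmin k k' hkk' ?_ ?_ <;>
    simp only [mem_Ico, mem_Ioc] at hk hk' <;> omega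

namespace IsMinimalRepeat

variable {c : ℕ → α} {i j a b : ℕ}

lemma apply_ne (hm : IsMinimalRepeat c i j) (hia : i < a) (haj : a < j) : c a ≠ c i := by
  rw [hm.eq]
  exact fun h => haj.ne (hm.injOn_Ioc ⟨hia, haj.le⟩ ⟨hm.lt, le_rfl⟩ h)

lemma injOn_Ico_of_lt (hm : IsMinimalRepeat c i j) (hia : i < a) (hb : b ≤ j + 1) :
    InjOn c (Ico a b) :=
  hm.injOn_Ioc.mono fun k hk => by simp only [mem_Ico, mem_Ioc] at hk ⊢; omega

lemma image_inter_image_subset (hm : IsMinimalRepeat c i j) :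
    c '' Ico i b ∩ c '' Ico b (j + 1) ⊆ {c i} := by
  rintro _ ⟨⟨k, hk, rfl⟩, ⟨k', hk', hkk'⟩⟩
  simp only [mem_Ico] at hk hk'
  rcases hk.1.eq_or_lt with rfl | hik
  · rfl
  · exact absurd (hm.injOn_Ioc ⟨hik, by omega⟩ ⟨by omega, by omega⟩ hkk'.symm) (by omega)

end IsMinimalRepeat

end Sequences

/-- A retraction of `G` onto a subgraph of the Hamming graph `∀ i, K i`, as in
`IsQuasiMedianGraph`. -/
structure HammingRetraction (G : SimpleGraph V) {ι : Type u} (K : ι → Type u) where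
  toFun : V → ∀ i, K i
  retr : (∀ i, K i) → V
  retr_toFun : ∀ v, retr (toFun v) = v
  hammingAdj_of_adj : ∀ {u v}, G.Adj u v → HammingAdj (toFun u) (toFun v)
  eq_or_adj_of_hammingAdj :
    ∀ {x y}, HammingAdj x y → retr x = retr y ∨ G.Adj (retr x) (retr y)

namespace HammingRetraction

variable {G : SimpleGraph V} {ι : Type u} {K : ι → Type u} (R : HammingRetraction G K)

instance : CoeFun (HammingRetraction G K) fun _ => V → ∀ i, K i := ⟨toFun⟩

variable {R} {u v w : V} {κ : ι}

lemma injective : Injective R := LeftInverse.injective R.retr_toFun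

lemma adj_iff : G.Adj u v ↔ HammingAdj (R u) (R v) := by
  refine ⟨R.hammingAdj_of_adj, fun h => ?_⟩
  have hne : u ≠ v := by
    rintro rfl
    obtain ⟨i, hi⟩ := hammingAdj_iff.1 h
    simp [diffSet_eq_empty_iff.2 rfl] at hi
  simpa [R.retr_toFun, hne] using R.eq_or_adj_of_hammingAdj h

lemma adj_of_diffSet_eq_singleton (h : diffSet (R u) (R v) = {κ}) : G.Adj u v :=
  adj_iff.2 (hammingAdj_iff.2 ⟨κ, h⟩)

lemma eq_or_adj_of_diffSet_subset (h : diffSet (R u) (R v) ⊆ {κ}) : u = v ∨ G.Adj u v := by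
  rcases subset_singleton_iff_eq.1 h with h | h
  · exact .inl (R.injective (diffSet_eq_empty_iff.1 h))
  · exact .inr (adj_of_diffSet_eq_singleton h)

lemma exists_diffSet_eq_singleton (h : G.Adj u v) : ∃ κ, diffSet (R u) (R v) = {κ} :=
  hammingAdj_iff.1 (R.hammingAdj_of_adj h)

lemma encard_diffSet_le_length (p : G.Walk u v) : (diffSet (R u) (R v)).encard ≤ p.length := by
  induction p with
  | nil => simp [diffSet_eq_empty_iff]
  | cons h p ih =>
    obtain ⟨κ, hκ⟩ := exists_diffSet_eq_singleton (R := R) h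
    calc _ ≤ _ := encard_le_encard (diffSet_subset_union _ _ _)
      _ ≤ _ := encard_union_le _ _
      _ ≤ 1 + p.length := by rw [hκ, encard_singleton]; gcongr
      _ = _ := by simp [add_comm]

lemma edist_retr_le (x y : ∀ i, K i) :
    G.edist (R.retr x) (R.retr y) ≤ (diffSet x y).encard := by
  classical
  by_cases hfin : (diffSet x y).Finite
  swap
  · simp [encard_eq_top_iff.2 hfin]
  suffices ∀ s : Set ι, s.Finite → ∀ x, diffSet x y = s →
      G.edist (R.retr x) (R.retr y) ≤ s.encard from this _ hfin x rfl
  intro s hs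
  induction s, hs using Set.Finite.induction_on with
  | empty => intro x hx; simp [diffSet_eq_empty_iff.1 hx]
  | @insert i s hi hs ih =>
    intro x hx
    have hxi : y i ≠ x i := fun h => (hx ▸ mem_insert i s : i ∈ diffSet x y) h.symm
    have hstep : G.edist (R.retr x) (R.retr (update x i (y i))) ≤ 1 := by
      have hadj := hammingAdj_iff.2 ⟨i, diffSet_update_self hxi⟩
      rcases R.eq_or_adj_of_hammingAdj hadj with h | h
      · simp [h]
      · exact (edist_eq_one_iff_adj.2 h).le
    have hrest : diffSet (update x i (y i)) y = s := by
      rw [diffSet_comm, diffSet_update_of_eq rfl, diffSet_comm, hx, insert_sdiff_self_of_notMem hi]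
    calc _ ≤ _ := G.edist_triangle
      _ ≤ 1 + s.encard := add_le_add hstep (ih _ hrest)
      _ = _ := by rw [encard_insert_of_notMem hi, add_comm]

lemma edist_eq (u v : V) : G.edist u v = (diffSet (R u) (R v)).encard := by
  refine le_antisymm ?_ ?_
  · simpa only [R.retr_toFun] using R.edist_retr_le (R u) (R v)
  · by_cases h : G.Reachable u v
    · obtain ⟨p, hp⟩ := h.exists_walk_length_eq_edist
      exact hp ▸ R.encard_diffSet_le_length p
    · simp [edist_eq_top_of_not_reachable h]

lemma encard_diffSet_retr_le (a : V) (y : ∀ i, K i) :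
    (diffSet (R a) (R (R.retr y))).encard ≤ (diffSet (R a) y).encard := by
  simpa only [← R.edist_eq, R.retr_toFun] using R.edist_retr_le (R a) y

lemma ne_of_mem_diffSet (h : κ ∈ diffSet (R u) (R v)) : u ≠ v := by
  rintro rfl
  exact h rfl

lemma not_adj_of_diffSet_eq_pair {κ' : ι} (h : diffSet (R u) (R v) = {κ, κ'})
    (hne : κ ≠ κ') : ¬ G.Adj u v := fun hadj => by
  obtain ⟨k, hk⟩ := exists_diffSet_eq_singleton (R := R) hadj
  have h1 : κ ∈ ({k} : Set ι) := hk ▸ h ▸ mem_insert _ _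
  have h2 : κ' ∈ ({k} : Set ι) := hk ▸ h ▸ mem_insert_of_mem _ rfl
  exact hne (h1.trans h2.symm)

lemma ne_of_not_adj {κ' : ι} (huv : diffSet (R u) (R v) = {κ})
    (hvw : diffSet (R v) (R w) = {κ'}) (hne : u ≠ w) (hnadj : ¬ G.Adj u w) : κ ≠ κ' := by
  rintro rfl
  have := (diffSet_subset_union _ (R v) _).trans (by rw [huv, hvw, union_self])
  exact (eq_or_adj_of_diffSet_subset this).elim hne hnadj

variable (R) in
def edgeDiff : Sym2 V → Set ι :=
  Sym2.lift ⟨fun u v => diffSet (R u) (R v), fun _ _ => diffSet_comm _ _⟩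

@[simp] lemma edgeDiff_mk : R.edgeDiff s(u, v) = diffSet (R u) (R v) := rfl

lemma edgeDiff_eq_of_qmEdgeRel {e f : Sym2 V} (h : QMEdgeRel G e f) :
    R.edgeDiff e = R.edgeDiff f := by
  obtain ⟨-, -, ⟨a, b, c, rfl, rfl, hab, hac, hbc⟩ |
    ⟨a, b, c, d, rfl, rfl, hab, hbc, hcd, hda, hnac, hnbd, hac, hbd⟩⟩ := h
  · obtain ⟨k₁, h₁⟩ := exists_diffSet_eq_singleton (R := R) hab
    obtain ⟨k₂, h₂⟩ := exists_diffSet_eq_singleton (R := R) hac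
    rw [edgeDiff_mk, edgeDiff_mk, h₁, h₂]
    by_contra hne
    have hne : k₂ ≠ k₁ := fun h => hne (h ▸ rfl)
    have hbc' := diffSet_eq_insert (by rw [diffSet_comm, h₁]) h₂ hne
    exact not_adj_of_diffSet_eq_pair hbc' hne hbc
  · obtain ⟨k₁, h₁⟩ := exists_diffSet_eq_singleton (R := R) hab
    obtain ⟨k₂, h₂⟩ := exists_diffSet_eq_singleton (R := R) hbc
    obtain ⟨k₃, h₃⟩ := exists_diffSet_eq_singleton (R := R) hcd
    obtain ⟨k₄, h₄⟩ := exists_diffSet_eq_singleton (R := R) hda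
    have h₁₂ := ne_of_not_adj h₁ h₂ hac hnac
    have h₂₃ := ne_of_not_adj h₂ h₃ hbd hnbd
    have h₃₄ := ne_of_not_adj h₃ h₄ (Ne.symm hac) fun h => hnac h.symm
    have hac' := diffSet_eq_insert h₁ h₂ (Ne.symm h₁₂)
    have hca := diffSet_eq_insert h₃ h₄ (Ne.symm h₃₄)
    have hk₃ : k₃ ∈ ({k₂, k₁} : Set ι) := by
      rw [← hac', diffSet_comm, hca]; exact mem_insert_of_mem _ rfl
    rw [edgeDiff_mk, edgeDiff_mk, h₁, diffSet_comm, h₃]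
    rcases hk₃ with h | h
    exacts [absurd h.symm h₂₃, h ▸ rfl]

lemma edgeDiff_eq_of_eqvGen {e f : Sym2 V} (h : Relation.EqvGen (QMEdgeRel G) e f) :
    R.edgeDiff e = R.edgeDiff f :=
  (Equivalence.eqvGen_iff (r := fun e f => R.edgeDiff e = R.edgeDiff f)
    ⟨fun _ => rfl, Eq.symm, Eq.trans⟩).1
      (Relation.EqvGen.mono (fun _ _ => edgeDiff_eq_of_qmEdgeRel) _ _ h)

lemma qmEdgeRel_of_square {a b c d : V} {κ κ' : ι} (hab : diffSet (R a) (R b) = {κ})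
    (hbc : diffSet (R b) (R c) = {κ'}) (hcd : diffSet (R c) (R d) = {κ})
    (hda : diffSet (R d) (R a) = {κ'}) (hne : κ ≠ κ') : QMEdgeRel G s(a, b) s(d, c) := by
  have hac := diffSet_eq_insert hab hbc (Ne.symm hne)
  have hbd := diffSet_eq_insert hbc hcd hne
  have hdc : diffSet (R d) (R c) = {κ} := by rw [diffSet_comm, hcd]
  refine ⟨adj_of_diffSet_eq_singleton hab, adj_of_diffSet_eq_singleton hdc, .inr
    ⟨a, b, c, d, rfl, rfl, adj_of_diffSet_eq_singleton hab, adj_of_diffSet_eq_singleton hbc,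
      adj_of_diffSet_eq_singleton hcd, adj_of_diffSet_eq_singleton hda,
      not_adj_of_diffSet_eq_pair hac (Ne.symm hne), not_adj_of_diffSet_eq_pair hbd hne,
      ne_of_mem_diffSet (hac ▸ mem_insert _ _), ne_of_mem_diffSet (hbd ▸ mem_insert _ _)⟩⟩

lemma dist_eq_of_injOn {g : ℕ → V} {c : ℕ → ι} {a b : ℕ} (hab : a ≤ b)
    (hc : ∀ k ∈ Ico a b, diffSet (R (g k)) (R (g (k + 1))) = {c k}) (hinj : InjOn c (Ico a b)) :
    G.dist (g a) (g b) = b - a := by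
  rw [SimpleGraph.dist, R.edist_eq, diffSet_eq_image_Ico (x := fun k => R (g k)) hab hc hinj,
    hinj.encard_image, ← (finite_Ico a b).cast_ncard_eq, ncard_Ico_nat, ENat.toNat_natCast]

lemma exists_diffSet_getVert_eq_singleton {u v : V} (p : G.Walk u v) (hp : 0 < p.length) :
    ∃ c : ℕ → ι, ∀ k < p.length,
      diffSet (R (p.getVert k)) (R (p.getVert (k + 1))) = {c k} := by
  obtain ⟨κ₀, -⟩ := exists_diffSet_eq_singleton (R := R) (p.adj_getVert_succ hp)
  have : ∀ k, ∃ κ, k < p.length → diffSet (R (p.getVert k)) (R (p.getVert (k + 1))) = {κ} :=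
    fun k => if hk : k < p.length then
      (exists_diffSet_eq_singleton (p.adj_getVert_succ hk)).imp fun _ h _ => h
    else ⟨κ₀, fun h => absurd h hk⟩
  choose c hc using this
  exact ⟨c, hc⟩

variable {g : ℕ → V} {c : ℕ → ι} {i j b : ℕ}

lemma diffSet_eq_image_of_isMinimalRepeat
    (hc : ∀ k ≤ j, diffSet (R (g k)) (R (g (k + 1))) = {c k}) (hm : IsMinimalRepeat c i j)
    (hib : i < b) (hbj : b ≤ j) :
    diffSet (R (g i)) (R (g b)) = c '' Ico i b ∧
      diffSet (R (g b)) (R (g (j + 1))) = c '' Ico b (j + 1) :=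
  ⟨diffSet_eq_image_Ico hib.le (fun k hk => hc k (by simp at hk; omega))
      (hm.injOn_Ico.mono (Ico_subset_Ico_right hbj)),
    diffSet_eq_image_Ico (by omega) (fun k hk => hc k (by simp at hk; omega))
      (hm.injOn_Ico_of_lt hib le_rfl)⟩

variable [DecidableEq ι]

lemma toFun_retr_update {a w w' : V} (hw : R w κ ≠ R a κ) (hw' : R w' κ ≠ R a κ)
    (hww' : diffSet (R a) (R w) ∩ diffSet (R a) (R w') ⊆ {κ})
    (hfin : (diffSet (R w) (R a)).Finite) (hfin' : (diffSet (R w') (R a)).Finite) :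
    R (R.retr (update (R a) κ (R w κ))) = update (R a) κ (R w κ) := by
  have hadj : HammingAdj (R a) (update (R a) κ (R w κ)) :=
    hammingAdj_iff.2 ⟨κ, diffSet_update_self hw⟩
  obtain ⟨κ', hκ'⟩ :
      ∃ κ', diffSet (R a) (R (R.retr (update (R a) κ (R w κ)))) ⊆ {κ'} := by
    rcases R.eq_or_adj_of_hammingAdj hadj with h | h <;> rw [R.retr_toFun] at h
    · exact ⟨κ, by simp [← h]⟩
    · exact (exists_diffSet_eq_singleton h).imp fun _ h => h.subset
  exact eq_update_of_encard_diffSet_le hw hw' hww' hfin hfin' hκ'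
    (R.encard_diffSet_retr_le w _) (R.encard_diffSet_retr_le w' _)

variable (R) in
noncomputable def rung (g : ℕ → V) (c : ℕ → ι) (i b : ℕ) : V :=
  R.retr (update (R (g b)) (c i) (R (g i) (c i)))

lemma toFun_rung (hc : ∀ k ≤ j, diffSet (R (g k)) (R (g (k + 1))) = {c k})
    (hm : IsMinimalRepeat c i j) (hib : i < b) (hbj : b ≤ j) :
    R (R.rung g c i b) = update (R (g b)) (c i) (R (g i) (c i)) := by
  obtain ⟨hi, hj⟩ := diffSet_eq_image_of_isMinimalRepeat hc hm hib hbj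
  refine toFun_retr_update (w' := g (j + 1)) ?_ ?_ ?_ ?_ ?_
  · exact (hi ▸ mem_image_of_mem c (left_mem_Ico.2 hib) : c i ∈ diffSet (R (g i)) (R (g b)))
  · refine Ne.symm (hj ▸ ?_ : c i ∈ diffSet (R (g b)) (R (g (j + 1))))
    exact hm.eq ▸ mem_image_of_mem c (⟨hbj, j.lt_succ_self⟩ : j ∈ Ico b (j + 1))
  · rw [diffSet_comm, hi, hj]; exact hm.image_inter_image_subset
  · exact hi ▸ (finite_Ico _ _).image c
  · rw [diffSet_comm, hj]; exact (finite_Ico _ _).image c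

lemma diffSet_rung (hc : ∀ k ≤ j, diffSet (R (g k)) (R (g (k + 1))) = {c k})
    (hm : IsMinimalRepeat c i j) (hib : i < b) (hbj : b ≤ j) :
    diffSet (R (g b)) (R (R.rung g c i b)) = {c i} := by
  rw [toFun_rung hc hm hib hbj]
  refine diffSet_update_self fun h => ?_
  have := (diffSet_eq_image_of_isMinimalRepeat hc hm hib hbj).1 ▸
    mem_image_of_mem c (left_mem_Ico.2 hib)
  exact this h

lemma rung_succ (hc : ∀ k ≤ j, diffSet (R (g k)) (R (g (k + 1))) = {c k})
    (hm : IsMinimalRepeat c i j) : R.rung g c i (i + 1) = g i := by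
  refine R.injective ?_
  rw [toFun_rung hc hm i.lt_succ_self hm.lt]
  refine (eq_update_of_diffSet_subset ?_).symm
  rw [diffSet_comm, hc i hm.lt.le]

lemma qmEdgeRel_rung (hc : ∀ k ≤ j, diffSet (R (g k)) (R (g (k + 1))) = {c k})
    (hm : IsMinimalRepeat c i j) (hib : i < b) (hbj : b < j) :
    QMEdgeRel G s(g b, R.rung g c i b) s(g (b + 1), R.rung g c i (b + 1)) := by
  have hcb := hm.apply_ne hib hbj
  refine qmEdgeRel_of_square (diffSet_rung hc hm hib hbj.le) ?_ ?_ ?_ hcb.symm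
  · rw [toFun_rung hc hm hib hbj.le, toFun_rung hc hm (by omega) hbj, diffSet_update_update,
      hc b hbj.le]
    exact sdiff_singleton_eq_self fun h => hcb h.symm
  · rw [diffSet_comm, diffSet_rung hc hm (by omega) hbj]
  · rw [diffSet_comm, hc b hbj.le]

lemma eqvGen_rung_last (hc : ∀ k ≤ j, diffSet (R (g k)) (R (g (k + 1))) = {c k})
    (hm : IsMinimalRepeat c i j) :
    Relation.EqvGen (QMEdgeRel G) s(g j, g (j + 1)) s(g j, R.rung g c i j) := by
  by_cases htop : R.rung g c i j = g (j + 1)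
  · rw [htop]; exact .refl _
  have hj := diffSet_rung hc hm hm.lt le_rfl
  have hsub : diffSet (R (g (j + 1))) (R (R.rung g c i j)) ⊆ {c i} := by
    refine (diffSet_subset_union _ (R (g j)) _).trans ?_
    rw [diffSet_comm, hc j le_rfl, hj, ← hm.eq, union_self]
  have hadj := (eq_or_adj_of_diffSet_subset hsub).resolve_left (Ne.symm htop)
  refine .rel _ _ ⟨adj_of_diffSet_eq_singleton (hc j le_rfl),
    adj_of_diffSet_eq_singleton hj, .inl ⟨g j, g (j + 1), _, rfl, rfl,
      adj_of_diffSet_eq_singleton (hc j le_rfl), adj_of_diffSet_eq_singleton hj, hadj⟩⟩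

lemma eqvGen_rung (hc : ∀ k ≤ j, diffSet (R (g k)) (R (g (k + 1))) = {c k})
    (hm : IsMinimalRepeat c i j) (hib : i < b) (hbj : b ≤ j) :
    Relation.EqvGen (QMEdgeRel G) s(g j, g (j + 1)) s(g b, R.rung g c i b) := by
  refine Nat.decreasingInduction' (fun k hkj hbk ih => ?_) hbj (eqvGen_rung_last hc hm)
  exact ih.trans _ _ _ (.symm _ _ (.rel _ _ (qmEdgeRel_rung hc hm (by omega) hkj)))

end HammingRetraction

/-- a non-geodesic path in a quasi-median graph contains two edges
dual to a common hyperplane J such that the subpath between them is a geodesic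
contained in a single fibre of J (it stays in the carrier and crosses no edge
of J). -/
theorem stmt_14 (G : SimpleGraph V) (hqm : IsQuasiMedianGraph G)
    {u v : V} (γ : G.Walk u v) (hng : G.dist u v < γ.length) :
    ∃ (i j : ℕ) (J : Set (Sym2 V)), i + 1 ≤ j ∧ j + 1 ≤ γ.length ∧
      IsHyperplane G J ∧
      s(γ.getVert i, γ.getVert (i + 1)) ∈ J ∧
      s(γ.getVert j, γ.getVert (j + 1)) ∈ J ∧
      G.dist (γ.getVert (i + 1)) (γ.getVert j) = j - (i + 1) ∧
      (∀ k, i + 1 ≤ k → k ≤ j → γ.getVert k ∈ hypCarrier G J) ∧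
      (∀ k, i + 1 ≤ k → k < j → s(γ.getVert k, γ.getVert (k + 1)) ∉ J) := by
  classical
  obtain ⟨-, ι, K, f, r, hrf, hf, hr⟩ := hqm
  let R : HammingRetraction G K := ⟨f, r, hrf, hf _ _, hr _ _⟩
  obtain ⟨c, hc⟩ := R.exists_diffSet_getVert_eq_singleton γ (by omega)
  have hnotInj : ¬ InjOn c (Iio γ.length) := fun hinj => by
    have := R.dist_eq_of_injOn (g := γ.getVert) (Nat.zero_le _) (fun k hk => hc k hk.2)
      (hinj.mono fun k hk => hk.2)
    rw [γ.getVert_zero, γ.getVert_length] at this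
    omega
  obtain ⟨i, j, hjL, hm⟩ := exists_isMinimalRepeat hnotInj
  have hc' : ∀ k ≤ j, diffSet (R (γ.getVert k)) (R (γ.getVert (k + 1))) = {c k} :=
    fun k hk => hc k (by omega)
  have hJ := fun b => R.eqvGen_rung (b := b) hc' hm
  refine ⟨i, j, _, hm.lt, hjL, ⟨_, γ.adj_getVert_succ hjL, rfl⟩, ?_, .refl _, ?_,
    fun k hik hkj => ⟨_, R.adj_of_diffSet_eq_singleton (R.diffSet_rung hc' hm hik hkj),
      hJ k hik hkj⟩, fun k hik hkj hk => hm.apply_ne hik hkj ?_⟩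
  · simpa [R.rung_succ hc' hm, Sym2.eq_swap] using hJ (i + 1) i.lt_succ_self hm.lt
  · exact R.dist_eq_of_injOn hm.lt (fun k hk => hc' k (by simp at hk; omega))
      (hm.injOn_Ico_of_lt i.lt_succ_self (by omega))
  · have := R.edgeDiff_eq_of_eqvGen hk
    rw [R.edgeDiff_mk, R.edgeDiff_mk, hc' j le_rfl, hc' k hkj.le,
      singleton_eq_singleton_iff] at this
    rw [← this, hm.eq]
end
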